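/- arXiv:2007.05844 — 5 statements merged into one kernel-verified Lean document; each statement's English description precedes it below -/
import Mathlib

section
/- Every almost-normal regular topological space is π-normal. -/
open Set

namespace PsiSpace

/-- An (infinite) almost disjoint family of infinite subsets of ℕ. -/
def AlmostDisjoint (𝒜 : Set (Set ℕ)) : Prop :=
  𝒜.Infinite ∧ (∀ a ∈ 𝒜, a.Infinite) ∧
    ∀ a ∈ 𝒜, ∀ b ∈ 𝒜, a ≠ b → (a ∩ b).Finite

/-- A maximal almost disjoint family. -/
def MadFamily (𝒜 : Set (Set ℕ)) : Prop :=
  AlmostDisjoint 𝒜 ∧ ∀ X : Set ℕ, X.Infinite → ∃ a ∈ 𝒜, (a ∩ X).Infinite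

/-- 𝒜↾B = {a ∈ 𝒜 : a ∩ B infinite}. -/
def ADRestrict (𝒜 : Set (Set ℕ)) (B : Set ℕ) : Set (Set ℕ) :=
  {a | a ∈ 𝒜 ∧ (a ∩ B).Infinite}

/-- 𝒜 has true cardinality 𝔠. -/
def TrueCardContinuum (𝒜 : Set (Set ℕ)) : Prop :=
  ∀ B : Set ℕ, (ADRestrict 𝒜 B).Finite ∨ Cardinal.mk ↥(ADRestrict 𝒜 B) = Cardinal.continuum

/-- The underlying set of the Mrówka–Isbell space Ψ(𝒜): ℕ together with the members of 𝒜. -/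
def Psi (𝒜 : Set (Set ℕ)) : Type := ℕ ⊕ {a : Set ℕ // a ∈ 𝒜}

/-- The isolated point of Ψ(𝒜) corresponding to n ∈ ℕ. -/
def Psi.nat {𝒜 : Set (Set ℕ)} (n : ℕ) : Psi 𝒜 := Sum.inl n

/-- The point of Ψ(𝒜) corresponding to a ∈ 𝒜. -/
def Psi.pt {𝒜 : Set (Set ℕ)} (a : {a : Set ℕ // a ∈ 𝒜}) : Psi 𝒜 := Sum.inr a

/-- The Mrówka–Isbell topology: each n ∈ ℕ is isolated, and basic neighbourhoods of a ∈ 𝒜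
are {a} ∪ (a \ F) for F finite. Equivalently, U is open iff for every a ∈ 𝒜 with a ∈ U,
all but finitely many elements of a belong to U. -/
instance psiTop (𝒜 : Set (Set ℕ)) : TopologicalSpace (Psi 𝒜) where
  IsOpen U := ∀ a : {a : Set ℕ // a ∈ 𝒜}, Psi.pt a ∈ U →
    {n : ℕ | n ∈ a.1 ∧ Psi.nat n ∉ U}.Finite
  isOpen_univ := fun a _ => by
    convert Set.finite_empty using 1
    ext n
    simp [Set.mem_univ]
  isOpen_inter := fun U V hU hV a ha => by
    refine ((hU a ha.1).union (hV a ha.2)).subset ?_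
    rintro n ⟨hn, hnUV⟩
    by_cases h : Psi.nat n ∈ U
    · exact Or.inr ⟨hn, fun h' => hnUV ⟨h, h'⟩⟩
    · exact Or.inl ⟨hn, h⟩
  isOpen_sUnion := fun S hS a ha => by
    obtain ⟨U, hUS, haU⟩ := ha
    exact (hS U hUS a haU).subset fun n hn => ⟨hn.1, fun h => hn.2 ⟨U, hUS, h⟩⟩

/-- The copy of a set W ⊆ ℕ inside Ψ(𝒜). -/
def PsiNat (𝒜 : Set (Set ℕ)) (W : Set ℕ) : Set (Psi 𝒜) := {x | ∃ n ∈ W, x = Psi.nat n}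

/-- The copy of a subfamily 𝒞 ⊆ 𝒜 inside Ψ(𝒜). -/
def PsiSub (𝒜 𝒞 : Set (Set ℕ)) : Set (Psi 𝒜) :=
  {x | ∃ a : {a : Set ℕ // a ∈ 𝒜}, a.1 ∈ 𝒞 ∧ x = Psi.pt a}

/-- A and B are separated by disjoint open sets. -/
def SepOpen {X : Type*} [TopologicalSpace X] (A B : Set X) : Prop :=
  ∃ U V : Set X, IsOpen U ∧ IsOpen V ∧ A ⊆ U ∧ B ⊆ V ∧ Disjoint U V

/-- Regular closed (closed domain): A is the closure of its interior. -/
def RegClosed {X : Type*} [TopologicalSpace X] (A : Set X) : Prop :=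
  closure (interior A) = A

/-- π-closed: a finite intersection of regular closed sets. -/
def PiClosed {X : Type*} [TopologicalSpace X] (A : Set X) : Prop :=
  ∃ S : Finset (Set X), (∀ B ∈ S, RegClosed B) ∧ A = ⋂₀ ↑S

/-- A is an intersection of at most n regular closed sets. -/
def InterOfAtMost {X : Type*} [TopologicalSpace X] (n : ℕ) (A : Set X) : Prop :=
  ∃ S : Finset (Set X), S.card ≤ n ∧ (∀ B ∈ S, RegClosed B) ∧ A = ⋂₀ ↑S

/-- Almost-normal: disjoint closed + regular closed sets are separated. -/
def AlmostNormal (X : Type*) [TopologicalSpace X] : Prop :=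
  ∀ A B : Set X, IsClosed A → RegClosed B → Disjoint A B → SepOpen A B

/-- π-normal: disjoint closed + π-closed sets are separated. -/
def PiNormal (X : Type*) [TopologicalSpace X] : Prop :=
  ∀ A B : Set X, IsClosed A → PiClosed B → Disjoint A B → SepOpen A B

/-- Quasi-normal: disjoint π-closed sets are separated. -/
def QuasiNormal (X : Type*) [TopologicalSpace X] : Prop :=
  ∀ A B : Set X, PiClosed A → PiClosed B → Disjoint A B → SepOpen A B

/-- Mildly-normal: disjoint regular closed sets are separated. -/
def MildlyNormal (X : Type*) [TopologicalSpace X] : Prop :=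
  ∀ A B : Set X, RegClosed A → RegClosed B → Disjoint A B → SepOpen A B

/-- Partly-normal: disjoint regular closed + π-closed sets are separated. -/
def PartlyNormal (X : Type*) [TopologicalSpace X] : Prop :=
  ∀ A B : Set X, RegClosed A → PiClosed B → Disjoint A B → SepOpen A B

/-- n-partly-normal: disjoint regular closed + (intersection of at most n regular closed)
sets are separated. -/
def NPartlyNormal (n : ℕ) (X : Type*) [TopologicalSpace X] : Prop :=
  ∀ A B : Set X, RegClosed A → InterOfAtMost n B → Disjoint A B → SepOpen A B

/-- 𝓘⁺(𝒜): the sets B ⊆ ℕ with 𝒜↾B infinite. -/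
def IPlus (𝒜 : Set (Set ℕ)) : Set (Set ℕ) := {B | (ADRestrict 𝒜 B).Infinite}

/-- Completely separable almost disjoint family. -/
def CompletelySeparable (𝒜 : Set (Set ℕ)) : Prop :=
  ∀ B ∈ IPlus 𝒜, ∃ a ∈ 𝒜, a ⊆ B

/-- A Luzin family: it can be enumerated as ⟨a_α : α < ω₁⟩ so that for each α < ω₁ and
n ∈ ℕ, the set {β < α : a_α ∩ a_β ⊆ n} is finite. -/
def LuzinFamily (𝒜 : Set (Set ℕ)) : Prop :=
  ∃ a : Ordinal.{0} → Set ℕ,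
    (∀ α, α < (Cardinal.aleph 1).ord → a α ∈ 𝒜) ∧
    (∀ x ∈ 𝒜, ∃ α, α < (Cardinal.aleph 1).ord ∧ a α = x) ∧
    (∀ α, α < (Cardinal.aleph 1).ord → ∀ β, β < (Cardinal.aleph 1).ord → α ≠ β → a α ≠ a β) ∧
    ∀ α, α < (Cardinal.aleph 1).ord → ∀ n : ℕ,
      {β : Ordinal.{0} | β < α ∧ a α ∩ a β ⊆ Set.Iio n}.Finite

/-- Strongly ℵ₀-separated almost disjoint family. -/
def StronglyAleph0Separated (𝒜 : Set (Set ℕ)) : Prop :=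
  ∀ A B : Set (Set ℕ), A ⊆ 𝒜 → B ⊆ 𝒜 → A.Countable → A.Infinite →
    B.Countable → B.Infinite → Disjoint A B →
    ∃ X : Set ℕ,
      (∀ a ∈ 𝒜, (a \ X).Finite ∨ (a ∩ X).Finite) ∧
      (∀ a ∈ A, (a \ X).Finite) ∧
      (∀ a ∈ B, (a ∩ X).Finite)

/-- Every almost-normal regular topological space is π-normal. -/
theorem almostNormal_regular_piNormal (X : Type*) [TopologicalSpace X] [RegularSpace X]
    (h : AlmostNormal X) : PiNormal X := by
  classical
  have key : ∀ n : ℕ, ∀ A B : Set X, IsClosed A → InterOfAtMost n B → Disjoint A B →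
      SepOpen A B := by
    intro n
    induction n with
    | zero =>
      rintro A B hA ⟨S, hcard, -, rfl⟩ hdisj
      have hS : S = ∅ := Finset.card_eq_zero.mp (Nat.le_zero.mp hcard)
      subst hS
      have hAe : A = ∅ := by
        have := hdisj
        simp only [Finset.coe_empty, Set.sInter_empty] at this
        simpa using Set.disjoint_univ.mp this
      exact ⟨∅, univ, isOpen_empty, isOpen_univ, by simp [hAe], by simp, by simp⟩
    | succ n ih =>
      rintro A B hA ⟨S, hcard, hreg, rfl⟩ hdisj
      rcases S.eq_empty_or_nonempty with rfl | ⟨F, hF⟩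
      · have hAe : A = ∅ := by
          have := hdisj
          simp only [Finset.coe_empty, Set.sInter_empty] at this
          simpa using Set.disjoint_univ.mp this
        exact ⟨∅, univ, isOpen_empty, isOpen_univ, by simp [hAe], by simp, by simp⟩
      · set S' := S.erase F with hS'
        have hS'card : S'.card ≤ n := by
          rw [hS', Finset.card_erase_of_mem hF]
          omega
        have hFreg := hreg F hF
        have hFclosed : IsClosed F := hFreg ▸ isClosed_closure
        have hsplit : ⋂₀ (↑S : Set (Set X)) = F ∩ ⋂₀ (↑S' : Set (Set X)) := by
          ext x
          simp only [Set.mem_sInter, Set.mem_inter_iff, Finset.mem_coe, hS',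
            Finset.mem_erase]
          constructor
          · intro hx
            exact ⟨hx F hF, fun t ht => hx t ht.2⟩
          · rintro ⟨hxF, hx⟩ t ht
            by_cases htF : t = F
            · subst htF; exact hxF
            · exact hx t ⟨htF, ht⟩
        have hdisj1 : Disjoint (A ∩ F) (⋂₀ (↑S' : Set (Set X))) := by
          rw [Set.disjoint_left]
          rintro x ⟨hxA, hxF⟩ hxS'
          exact Set.disjoint_left.mp hdisj hxA (hsplit ▸ ⟨hxF, hxS'⟩)
        obtain ⟨U₁, V₁, hU₁, hV₁, hAFU, hS'V, hUV₁⟩ :=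
          ih (A ∩ F) (⋂₀ (↑S' : Set (Set X))) (hA.inter hFclosed)
            ⟨S', hS'card, fun C hC => hreg C (Finset.mem_of_mem_erase hC), rfl⟩ hdisj1
        have hdisj2 : Disjoint (A \ U₁) F := by
          rw [Set.disjoint_left]
          rintro x ⟨hxA, hxU⟩ hxF
          exact hxU (hAFU ⟨hxA, hxF⟩)
        obtain ⟨W, W', hW, hW', hAW, hFW, hWW'⟩ :=
          h (A \ U₁) F (hA.sdiff hU₁) hFreg hdisj2
        refine ⟨U₁ ∪ W, V₁ ∩ W', hU₁.union hW, hV₁.inter hW', ?_, ?_, ?_⟩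
        · intro x hx
          by_cases hxU : x ∈ U₁
          · exact Or.inl hxU
          · exact Or.inr (hAW ⟨hx, hxU⟩)
        · intro x hx
          rw [hsplit] at hx
          exact ⟨hS'V hx.2, hFW hx.1⟩
        · rw [Set.disjoint_union_left]
          exact ⟨hUV₁.mono_right inf_le_left, hWW'.mono_right inf_le_right⟩
  rintro A B hA ⟨S, hreg, rfl⟩ hdisj
  exact key S.card A _ hA ⟨S, le_rfl, hreg, rfl⟩ hdisj

end PsiSpace
end

section
/- If 𝒜 is an almost disjoint family of true cardinality 𝔠, then for every countably infinite subfamily 𝒞 ⊆ 𝒜, the sets 𝒞 and 𝒜 ∖ 𝒞 cannot be separated in Ψ(𝒜). -/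
open Set

namespace PsiSpace

/-- If 𝒜 is an almost disjoint family of true cardinality 𝔠, then for every
countably infinite subfamily 𝒞 ⊆ 𝒜, the sets 𝒞 and 𝒜 ∖ 𝒞 cannot be separated in Ψ(𝒜). -/
theorem trueCard_no_separation (𝒜 : Set (Set ℕ)) (had : AlmostDisjoint 𝒜)
    (htc : TrueCardContinuum 𝒜) (𝒞 : Set (Set ℕ)) (h𝒞 : 𝒞 ⊆ 𝒜)
    (hcount : 𝒞.Countable) (hinf : 𝒞.Infinite) :
    ¬ SepOpen (PsiSub 𝒜 𝒞) (PsiSub 𝒜 (𝒜 \ 𝒞)) := by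
  rintro ⟨U, V, hU, hV, hCU, hCV, hdisj⟩
  set W : Set ℕ := {n | Psi.nat (𝒜 := 𝒜) n ∈ U} with hW
  -- every c ∈ 𝒞 has c ∩ W infinite
  have hsub : 𝒞 ⊆ ADRestrict 𝒜 W := by
    intro c hc
    have hc𝒜 : c ∈ 𝒜 := h𝒞 hc
    have hmem : Psi.pt (𝒜 := 𝒜) ⟨c, hc𝒜⟩ ∈ U := hCU ⟨⟨c, hc𝒜⟩, hc, rfl⟩
    have hfin : {n : ℕ | n ∈ c ∧ Psi.nat (𝒜 := 𝒜) n ∉ U}.Finite := hU ⟨c, hc𝒜⟩ hmem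
    have hcinf : c.Infinite := had.2.1 c hc𝒜
    refine ⟨hc𝒜, ?_⟩
    intro hfin2
    apply hcinf
    have : c ⊆ (c ∩ W) ∪ {n : ℕ | n ∈ c ∧ Psi.nat (𝒜 := 𝒜) n ∉ U} := by
      intro n hn
      by_cases h : Psi.nat (𝒜 := 𝒜) n ∈ U
      · exact Or.inl ⟨hn, h⟩
      · exact Or.inr ⟨hn, h⟩
    exact (hfin2.union hfin).subset this
  have hADinf : (ADRestrict 𝒜 W).Infinite := hinf.mono hsub
  have hcard : Cardinal.mk ↥(ADRestrict 𝒜 W) = Cardinal.continuum := by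
    rcases htc W with h | h
    · exact absurd h hADinf
    · exact h
  -- find a ∈ ADRestrict 𝒜 W with a ∉ 𝒞
  have hex : ∃ a ∈ ADRestrict 𝒜 W, a ∉ 𝒞 := by
    by_contra h
    push_neg at h
    have hsub2 : ADRestrict 𝒜 W ⊆ 𝒞 := h
    have : (ADRestrict 𝒜 W).Countable := hcount.mono hsub2
    have hle : Cardinal.mk ↥(ADRestrict 𝒜 W) ≤ Cardinal.aleph0 := Set.Countable.le_aleph0 this
    rw [hcard] at hle
    exact absurd hle (not_le.mpr Cardinal.aleph0_lt_continuum)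
  obtain ⟨a, ⟨ha𝒜, haW⟩, haC⟩ := hex
  have hmemV : Psi.pt (𝒜 := 𝒜) ⟨a, ha𝒜⟩ ∈ V := hCV ⟨⟨a, ha𝒜⟩, ⟨ha𝒜, haC⟩, rfl⟩
  have hfin : {n : ℕ | n ∈ a ∧ Psi.nat (𝒜 := 𝒜) n ∉ V}.Finite := hV ⟨a, ha𝒜⟩ hmemV
  apply haW
  refine hfin.subset ?_
  rintro n ⟨hna, hnW⟩
  exact ⟨hna, fun hv => hdisj.le_bot ⟨hnW, hv⟩⟩


end PsiSpace
end

section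
/- If 𝒜 is a completely separable almost disjoint family, then for every B ∈ 𝓘⁺(𝒜) the set {a ∈ 𝒜 : a ⊆ B} has cardinality 𝔠; consequently, every completely separable almost disjoint family is of true cardinality 𝔠. -/
open Set

namespace PsiSpace

/-!
Peel off members of 𝒜 one after the other inside B: by complete separability and almost
disjointness this gives pairwise disjoint a₀, a₁, … ∈ 𝒜 below B. Index them by the finite
binary words and pick a point pₛ ∈ aₛ. A branch f ∈ 2^ℕ determines the set
D_f = ⋃ₙ (a_{f↾n} \ {p_{f↾n}}) ∈ 𝓘⁺(𝒜), which contains some b_f ∈ 𝒜. Two branches share only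
finitely many nodes, so b_f = b_g with f ≠ g would be covered by finitely many aₛ and hence equal
one of them, which is impossible because D_f misses every pₛ. So f ↦ b_f is injective.
-/

open Function

namespace AlmostDisjoint

variable {𝒜 : Set (Set ℕ)}

theorem sdiff_mem_iPlus (had : AlmostDisjoint 𝒜) {C a : Set ℕ} (hC : C ∈ IPlus 𝒜)
    (ha : a ∈ 𝒜) : C \ a ∈ IPlus 𝒜 := by
  refine (hC.sdiff (finite_singleton a)).mono ?_
  rintro b ⟨⟨hb, hbC⟩, hba : b ≠ a⟩
  refine ⟨hb, (hbC.sdiff (had.2.2 b hb a ha hba)).mono ?_⟩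
  rintro x ⟨⟨hxb, hxC⟩, hx⟩
  exact ⟨hxb, hxC, fun hxa => hx ⟨hxb, hxa⟩⟩

theorem exists_eq_of_subset_biUnion (had : AlmostDisjoint 𝒜) {ι : Type*} {a : ι → Set ℕ}
    (ha : ∀ i, a i ∈ 𝒜) {b : Set ℕ} (hb : b ∈ 𝒜) {S : Set ι} (hS : S.Finite)
    (hbS : b ⊆ ⋃ i ∈ S, a i) : ∃ i ∈ S, b = a i := by
  by_contra! hne
  refine had.2.1 b hb ((hS.biUnion fun i hi => had.2.2 b hb (a i) (ha i) (hne i hi)).subset ?_)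
  rw [← inter_iUnion₂]
  exact subset_inter subset_rfl hbS

end AlmostDisjoint

namespace CompletelySeparable

variable {𝒜 : Set (Set ℕ)}

theorem exists_seq_pairwise_disjoint (hcs : CompletelySeparable 𝒜) (had : AlmostDisjoint 𝒜)
    {B : Set ℕ} (hB : B ∈ IPlus 𝒜) :
    ∃ a : ℕ → Set ℕ, (∀ n, a n ∈ 𝒜 ∧ a n ⊆ B) ∧ Pairwise (Disjoint on a) := by
  choose! pick hpick𝒜 hpick_subset using hcs
  set C : ℕ → Set ℕ := fun n => (fun C => C \ pick C)^[n] B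
  have hC_succ (n : ℕ) : C (n + 1) = C n \ pick (C n) := iterate_succ_apply' _ _ _
  have hC (n : ℕ) : C n ∈ IPlus 𝒜 := by
    induction n with
    | zero => exact hB
    | succ n ih => exact hC_succ n ▸ had.sdiff_mem_iPlus ih (hpick𝒜 _ ih)
  have hC_anti : Antitone C :=
    antitone_nat_of_succ_le fun n => (hC_succ n).trans_subset sdiff_subset
  refine ⟨fun n => pick (C n),
    fun n => ⟨hpick𝒜 _ (hC n), (hpick_subset _ (hC n)).trans (hC_anti n.zero_le)⟩,
    (pairwise_disjoint_on _).2 fun m n hmn => ?_⟩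
  have hn : pick (C n) ⊆ C m \ pick (C m) :=
    (hpick_subset _ (hC n)).trans ((hC_anti hmn).trans (hC_succ m).subset)
  exact disjoint_sdiff_self_right.mono_right hn

end CompletelySeparable

def puncturedUnion {ι : Type*} (a : ι → Set ℕ) (p : ι → ℕ) (X : Set ι) : Set ℕ :=
  ⋃ i ∈ X, a i \ {p i}

section puncturedUnion

variable {𝒜 : Set (Set ℕ)} {ι : Type*} {a : ι → Set ℕ} {p : ι → ℕ}

theorem puncturedUnion_subset {B : Set ℕ} (haB : ∀ i, a i ⊆ B) (X : Set ι) :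
    puncturedUnion a p X ⊆ B :=
  iUnion₂_subset fun i _ => sdiff_subset.trans (haB i)

theorem puncturedUnion_mem_iPlus (had : AlmostDisjoint 𝒜) (ha : ∀ i, a i ∈ 𝒜)
    (hdisj : Pairwise (Disjoint on a)) (hp : ∀ i, p i ∈ a i) {X : Set ι} (hX : X.Infinite) :
    puncturedUnion a p X ∈ IPlus 𝒜 := by
  have ha_inj : Injective a := fun i j hij =>
    by_contra fun hne => (hdisj hne).ne_of_mem (hp i) (hij ▸ hp i) rfl
  refine (hX.image ha_inj.injOn).mono ?_
  rintro _ ⟨i, hi, rfl⟩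
  refine ⟨ha i, ((had.2.1 _ (ha i)).sdiff (finite_singleton (p i))).mono ?_⟩
  exact subset_inter sdiff_subset (subset_biUnion_of_mem (u := fun i => a i \ {p i}) hi)

theorem notMem_puncturedUnion (hdisj : Pairwise (Disjoint on a)) (hp : ∀ i, p i ∈ a i)
    (i : ι) (X : Set ι) : p i ∉ puncturedUnion a p X := by
  simp only [puncturedUnion, mem_iUnion₂, mem_sdiff, mem_singleton_iff, not_exists, not_and,
    not_not]
  intro j _ hj
  obtain rfl : j = i := by_contra fun hne => (hdisj hne).ne_of_mem hj (hp i) rfl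
  rfl

theorem puncturedUnion_inter_subset (hdisj : Pairwise (Disjoint on a)) (X Y : Set ι) :
    puncturedUnion a p X ∩ puncturedUnion a p Y ⊆ ⋃ i ∈ X ∩ Y, a i := by
  simp only [puncturedUnion, subset_def, mem_inter_iff, mem_iUnion₂, mem_sdiff]
  rintro x ⟨⟨i, hi, hxi, -⟩, ⟨j, hj, hxj, -⟩⟩
  obtain rfl : i = j := by_contra fun hne => (hdisj hne).ne_of_mem hxi hxj rfl
  exact ⟨i, ⟨hi, hj⟩, hxi⟩

theorem injective_of_subset_puncturedUnion (had : AlmostDisjoint 𝒜) (ha : ∀ i, a i ∈ 𝒜)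
    (hdisj : Pairwise (Disjoint on a)) (hp : ∀ i, p i ∈ a i) {κ : Type*} {X : κ → Set ι}
    (hX : Pairwise fun k l => (X k ∩ X l).Finite) {b : κ → Set ℕ} (hb𝒜 : ∀ k, b k ∈ 𝒜)
    (hb : ∀ k, b k ⊆ puncturedUnion a p (X k)) : Injective b := by
  intro k l hkl
  by_contra hne
  have hcover : b k ⊆ ⋃ i ∈ X k ∩ X l, a i :=
    (subset_inter (hb k) (hkl ▸ hb l)).trans (puncturedUnion_inter_subset hdisj _ _)
  obtain ⟨i, -, hi⟩ := had.exists_eq_of_subset_biUnion ha (hb𝒜 k) (hX hne) hcover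
  exact notMem_puncturedUnion hdisj hp i (X k) (hb k (hi ▸ hp i))

end puncturedUnion

def prefixes (f : ℕ → Bool) : Set (List Bool) :=
  range fun n => (List.range n).map f

theorem infinite_prefixes (f : ℕ → Bool) : (prefixes f).Infinite :=
  infinite_range_of_injective fun m n h => by
    simpa using congrArg List.length h

theorem finite_prefixes_inter_prefixes {f g : ℕ → Bool} (hfg : f ≠ g) :
    (prefixes f ∩ prefixes g).Finite := by
  obtain ⟨k, hk⟩ := ne_iff.1 hfg
  refine ((finite_Iic k).image fun n => (List.range n).map f).subset ?_
  rintro _ ⟨⟨n, rfl⟩, ⟨m, hm⟩⟩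
  obtain rfl : m = n := by simpa using congrArg List.length hm
  refine ⟨m, mem_Iic.2 (not_lt.1 fun hkn => hk ?_), rfl⟩
  exact (List.map_inj_left.1 hm k (List.mem_range.2 hkn)).symm

theorem CompletelySeparable.continuum_le_mk_subset {𝒜 : Set (Set ℕ)}
    (hcs : CompletelySeparable 𝒜) (had : AlmostDisjoint 𝒜) {B : Set ℕ} (hB : B ∈ IPlus 𝒜) :
    Cardinal.continuum ≤ Cardinal.mk ↥{a : Set ℕ | a ∈ 𝒜 ∧ a ⊆ B} := by
  obtain ⟨a, ha, hdisj⟩ := hcs.exists_seq_pairwise_disjoint had hB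
  set a' : List Bool → Set ℕ := a ∘ Encodable.encode
  have hdisj' : Pairwise (Disjoint on a') := hdisj.comp_of_injective Encodable.encode_injective
  choose p hp using fun s : List Bool => (had.2.1 _ (ha (Encodable.encode s)).1).nonempty
  have hD (f : ℕ → Bool) : puncturedUnion a' p (prefixes f) ∈ IPlus 𝒜 :=
    puncturedUnion_mem_iPlus had (fun s => (ha _).1) hdisj' hp (infinite_prefixes f)
  choose b hb𝒜 hb using fun f => hcs _ (hD f)
  have hb_inj : Injective b :=
    injective_of_subset_puncturedUnion had (fun s => (ha _).1) hdisj' hp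
      (fun _ _ => finite_prefixes_inter_prefixes) hb𝒜 hb
  calc Cardinal.continuum = Cardinal.mk (ℕ → Bool) := by simp
    _ ≤ _ := Cardinal.mk_le_of_injective (f := fun f => ⟨b f, hb𝒜 f,
        (hb f).trans (puncturedUnion_subset (fun s => (ha _).2) _)⟩)
        fun f g h => hb_inj (congrArg Subtype.val h)

/-- If 𝒜 is a completely separable almost disjoint family, then for every
B ∈ 𝓘⁺(𝒜) the set {a ∈ 𝒜 : a ⊆ B} has cardinality 𝔠; consequently every completely
separable almost disjoint family is of true cardinality 𝔠. -/
theorem completelySeparable_trueCard (𝒜 : Set (Set ℕ)) (had : AlmostDisjoint 𝒜)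
    (hcs : CompletelySeparable 𝒜) :
    (∀ B ∈ IPlus 𝒜, Cardinal.mk ↥{a : Set ℕ | a ∈ 𝒜 ∧ a ⊆ B} = Cardinal.continuum) ∧
      TrueCardContinuum 𝒜 := by
  have key (B : Set ℕ) (hB : B ∈ IPlus 𝒜) :
      Cardinal.mk ↥{a : Set ℕ | a ∈ 𝒜 ∧ a ⊆ B} = Cardinal.continuum :=
    le_antisymm ((Cardinal.mk_subtype_le _).trans Cardinal.mk_set_nat.le)
      (hcs.continuum_le_mk_subset had hB)
  refine ⟨key, fun B => or_iff_not_imp_left.2 fun hB => le_antisymm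
    ((Cardinal.mk_subtype_le _).trans Cardinal.mk_set_nat.le)
    ((key B hB).symm.le.trans (Cardinal.mk_le_mk_of_subset ?_))⟩
  rintro a ⟨ha, haB⟩
  exact ⟨ha, (inter_eq_left.2 haB).symm ▸ had.2.1 a ha⟩

end PsiSpace
end

section
/- Let ℕ = V ∪ W be a partition of ℕ into two disjoint infinite sets, let 𝒜₀ and 𝒜₁ be almost disjoint families of true cardinality 𝔠 consisting of infinite subsets of V and of W respectively, let 𝒞 be a countably infinite subset of 𝒜₀, and let α : 𝒜₀ ∖ 𝒞 → 𝒜₁ be a bijection. Then 𝒜 = {a ∪ α(a) : a ∈ 𝒜₀ ∖ 𝒞} ∪ 𝒞 is an almost disjoint family of true cardinality 𝔠 satisfying cl_{Ψ(𝒜)}(W) ∩ 𝒜 = 𝒜 ∖ 𝒞; in particular, Ψ(𝒜) is not almost-normal. -/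
/-!
Every member of `𝒜` is `a ∪ partner 𝒞 α a` for a unique `a ∈ 𝒜₀`, where the partner is `α a`
off `𝒞` and empty on `𝒞`; since the two halves live in the disjoint sets `V` and `W`, this
presents `𝒜` as an injective image of `𝒜₀`, and almost disjointness and true cardinality `𝔠`
pass along it. A member of `𝒜` lies in `cl W` iff it meets `W` in an infinite set, i.e. iff it is
not in `𝒞`. The closed set `𝒞` and the regular closed set `cl W` cannot be separated: an open
`U ⊇ 𝒞` almost contains every `c ∈ 𝒞`, so `U ∩ ℕ` meets infinitely many, hence `𝔠` many, members
of `𝒜` in an infinite set, and one of them lies outside the countable `𝒞`, hence in `cl W`.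
-/

open Set

namespace PsiSpace

theorem regClosed_closure_of_isOpen {X : Type*} [TopologicalSpace X] {U : Set X}
    (hU : IsOpen U) : RegClosed (closure U) :=
  subset_antisymm (closure_minimal interior_subset isClosed_closure)
    (closure_mono hU.subset_interior_closure)

theorem nonempty_diff_of_mk_eq_continuum {X : Type*} {s t : Set X}
    (hs : Cardinal.mk s = Cardinal.continuum) (ht : t.Countable) : (s \ t).Nonempty := by
  rw [Set.nonempty_iff_ne_empty, Ne, Set.sdiff_eq_empty]
  intro hst
  have : Cardinal.mk s ≤ Cardinal.aleph0 := (ht.mono hst).le_aleph0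
  exact (hs ▸ this).not_gt Cardinal.aleph0_lt_continuum

section Psi

variable {𝒜 : Set (Set ℕ)}

theorem Psi.nat_ne_pt (n : ℕ) (a : {a : Set ℕ // a ∈ 𝒜}) : (Psi.nat n : Psi 𝒜) ≠ Psi.pt a :=
  Sum.inl_ne_inr

theorem Psi.pt_injective : Function.Injective (Psi.pt : {a : Set ℕ // a ∈ 𝒜} → Psi 𝒜) :=
  Sum.inr_injective

theorem Psi.finite_diff_of_isOpen {U : Set (Psi 𝒜)} (hU : IsOpen U)
    {a : {a : Set ℕ // a ∈ 𝒜}} (ha : Psi.pt a ∈ U) : (a.1 \ {n | Psi.nat n ∈ U}).Finite :=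
  hU a ha

theorem isOpen_psiNat (S : Set ℕ) : IsOpen (PsiNat 𝒜 S) := by
  rintro a ⟨n, -, hn⟩
  exact absurd hn.symm (Psi.nat_ne_pt n a)

theorem isOpen_insert_pt_psiNat_diff (a : {a : Set ℕ // a ∈ 𝒜}) {F : Set ℕ} (hF : F.Finite) :
    IsOpen (insert (Psi.pt a) (PsiNat 𝒜 (a.1 \ F))) := by
  rintro b (hb | ⟨n, -, hn⟩)
  · obtain rfl := Psi.pt_injective hb
    refine hF.subset fun n ⟨hna, hnU⟩ => ?_
    by_contra hnF
    exact hnU (Or.inr ⟨n, ⟨hna, hnF⟩, rfl⟩)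
  · exact absurd hn.symm (Psi.nat_ne_pt n b)

theorem mem_closure_psiNat_iff {S : Set ℕ} (a : {a : Set ℕ // a ∈ 𝒜}) :
    Psi.pt a ∈ closure (PsiNat 𝒜 S) ↔ (a.1 ∩ S).Infinite := by
  rw [mem_closure_iff]
  constructor
  · intro h hfin
    obtain ⟨-, hU, n, hnS, rfl⟩ := h _ (isOpen_insert_pt_psiNat_diff a hfin) (Or.inl rfl)
    rcases hU with hn | ⟨m, hm, hmn⟩
    · exact Psi.nat_ne_pt n a hn
    · obtain rfl : m = n := Sum.inl_injective hmn.symm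
      exact hm.2 ⟨hm.1, hnS⟩
  · intro hinf U hU haU
    obtain ⟨n, ⟨hna, hnS⟩, hnU⟩ := (hinf.sdiff (Psi.finite_diff_of_isOpen hU haU)).nonempty
    exact ⟨Psi.nat n, not_not.mp fun h => hnU ⟨hna, h⟩, n, hnS, rfl⟩

theorem isClosed_psiSub (𝒞 : Set (Set ℕ)) : IsClosed (PsiSub 𝒜 𝒞) := by
  rw [← isOpen_compl_iff]
  refine fun _ _ => Set.finite_empty.subset ?_
  rintro n ⟨-, hn⟩
  obtain ⟨c, -, hc⟩ := not_not.mp hn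
  exact Psi.nat_ne_pt n c hc

theorem closure_psiNat_inter_psiSub {𝒞 : Set (Set ℕ)} {S : Set ℕ}
    (hS : ∀ a ∈ 𝒜, (a ∩ S).Infinite ↔ a ∉ 𝒞) :
    closure (PsiNat 𝒜 S) ∩ PsiSub 𝒜 𝒜 = PsiSub 𝒜 (𝒜 \ 𝒞) := by
  ext x
  constructor
  · rintro ⟨hx, a, -, rfl⟩
    exact ⟨a, ⟨a.2, (hS a a.2).1 ((mem_closure_psiNat_iff a).1 hx)⟩, rfl⟩
  · rintro ⟨a, ⟨ha, ha𝒞⟩, rfl⟩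
    exact ⟨(mem_closure_psiNat_iff a).2 ((hS a ha).2 ha𝒞), a, ha, rfl⟩

theorem not_almostNormal_of_inter_infinite_iff {𝒞 : Set (Set ℕ)} {S : Set ℕ}
    (hinf : ∀ a ∈ 𝒜, a.Infinite) (hc : TrueCardContinuum 𝒜) (h𝒞 : 𝒞 ⊆ 𝒜)
    (hcc : 𝒞.Countable) (hci : 𝒞.Infinite) (hS : ∀ a ∈ 𝒜, (a ∩ S).Infinite ↔ a ∉ 𝒞) :
    ¬ AlmostNormal (Psi 𝒜) := by
  intro hAN
  have hdisj : Disjoint (PsiSub 𝒜 𝒞) (closure (PsiNat 𝒜 S)) := by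
    rw [Set.disjoint_left]
    rintro _ ⟨c, hc𝒞, rfl⟩ hcl
    exact (hS c c.2).1 ((mem_closure_psiNat_iff c).1 hcl) hc𝒞
  obtain ⟨U, U', hU, hU', h𝒞U, hSU', hUU'⟩ :=
    hAN _ _ (isClosed_psiSub 𝒞) (regClosed_closure_of_isOpen (isOpen_psiNat S)) hdisj
  have h𝒞B : 𝒞 ⊆ ADRestrict 𝒜 {n | Psi.nat n ∈ U} := fun c hc𝒞 => by
    have hfin := Psi.finite_diff_of_isOpen hU (h𝒞U ⟨⟨c, h𝒞 hc𝒞⟩, hc𝒞, rfl⟩)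
    exact ⟨h𝒞 hc𝒞, Set.sdiff_sdiff_right_self c _ ▸ (hinf c (h𝒞 hc𝒞)).sdiff hfin⟩
  obtain ⟨x, ⟨hx, hxU⟩, hx𝒞⟩ := nonempty_diff_of_mk_eq_continuum
    ((hc _).resolve_left (hci.mono h𝒞B)) hcc
  have hxU' := Psi.finite_diff_of_isOpen hU'
    (hSU' ((mem_closure_psiNat_iff ⟨x, hx⟩).2 ((hS x hx).2 hx𝒞)))
  obtain ⟨n, ⟨hnx, hnU⟩, hnU'⟩ := (hxU.sdiff hxU').nonempty
  exact Set.disjoint_left.mp hUU' hnU (not_not.mp fun h => hnU' ⟨hnx, h⟩)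

end Psi

def FiniteOrContinuum (s : Set (Set ℕ)) : Prop :=
  s.Finite ∨ Cardinal.mk s = Cardinal.continuum

theorem FiniteOrContinuum.union {s t : Set (Set ℕ)} (hs : FiniteOrContinuum s)
    (ht : FiniteOrContinuum t) : FiniteOrContinuum (s ∪ t) := by
  have hle : Cardinal.mk ↥(s ∪ t) ≤ Cardinal.continuum :=
    Cardinal.mk_set_nat ▸ Cardinal.mk_set_le _
  rcases hs with hs | hs
  · rcases ht with ht | ht
    · exact Or.inl (hs.union ht)
    · exact Or.inr (hle.antisymm (ht ▸ Cardinal.mk_le_mk_of_subset subset_union_right))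
  · exact Or.inr (hle.antisymm (hs ▸ Cardinal.mk_le_mk_of_subset subset_union_left))

theorem finiteOrContinuum_image_iff {f : Set ℕ → Set ℕ} {s : Set (Set ℕ)} (hf : InjOn f s) :
    FiniteOrContinuum (f '' s) ↔ FiniteOrContinuum s := by
  rw [FiniteOrContinuum, finite_image_iff hf, Cardinal.mk_image_eq_of_injOn _ _ hf]
  rfl

section Gluing

variable {V W a a' b b' : Set ℕ}

theorem union_inter_left_of_subset (hVW : Disjoint V W) (ha : a ⊆ V) (ha' : a' ⊆ W) :
    (a ∪ a') ∩ V = a := by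
  rw [union_inter_distrib_right, inter_eq_left.2 ha, (hVW.symm.mono_left ha').inter_eq,
    union_empty]

theorem union_inter_union_subset (hVW : Disjoint V W) (ha : a ⊆ V) (hb : b ⊆ V)
    (ha' : a' ⊆ W) (hb' : b' ⊆ W) : (a ∪ a') ∩ (b ∪ b') ⊆ a ∩ b ∪ a' ∩ b' := by
  rintro x ⟨hxa | hxa', hxb | hxb'⟩
  · exact Or.inl ⟨hxa, hxb⟩
  · exact absurd (hb' hxb') (disjoint_left.1 hVW (ha hxa))
  · exact absurd (ha' hxa') (disjoint_left.1 hVW (hb hxb))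
  · exact Or.inr ⟨hxa', hxb'⟩

variable {𝒜₀ 𝒜₁ 𝒞 : Set (Set ℕ)} {α : Set ℕ → Set ℕ}

open Classical in
noncomputable def partner (𝒞 : Set (Set ℕ)) (α : Set ℕ → Set ℕ) (a : Set ℕ) : Set ℕ :=
  if a ∈ 𝒞 then ∅ else α a

theorem partner_of_mem (ha : a ∈ 𝒞) : partner 𝒞 α a = ∅ := if_pos ha

theorem partner_of_notMem (ha : a ∉ 𝒞) : partner 𝒞 α a = α a := if_neg ha

theorem partner_subset (h1W : ∀ a ∈ 𝒜₁, a ⊆ W) (hα : MapsTo α (𝒜₀ \ 𝒞) 𝒜₁) (ha : a ∈ 𝒜₀) :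
    partner 𝒞 α a ⊆ W := by
  by_cases ha𝒞 : a ∈ 𝒞
  · exact partner_of_mem ha𝒞 ▸ empty_subset W
  · exact partner_of_notMem ha𝒞 ▸ h1W _ (hα ⟨ha, ha𝒞⟩)

theorem image_union_partner (h𝒞 : 𝒞 ⊆ 𝒜₀) :
    (fun a => a ∪ partner 𝒞 α a) '' 𝒜₀ = (fun a => a ∪ α a) '' (𝒜₀ \ 𝒞) ∪ 𝒞 := by
  conv_lhs => rw [← sdiff_union_of_subset h𝒞, image_union]
  congr 1
  · exact image_congr fun a ha => by rw [partner_of_notMem ha.2]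
  · exact (image_congr fun a ha => by rw [partner_of_mem ha, union_empty]; rfl).trans (image_id _)

theorem injOn_union_partner (hVW : Disjoint V W) (h0V : ∀ a ∈ 𝒜₀, a ⊆ V)
    (h1W : ∀ a ∈ 𝒜₁, a ⊆ W) (hα : MapsTo α (𝒜₀ \ 𝒞) 𝒜₁) :
    InjOn (fun a => a ∪ partner 𝒞 α a) 𝒜₀ := fun a ha b hb hab => by
  rw [← union_inter_left_of_subset hVW (h0V a ha) (partner_subset h1W hα ha),
    ← union_inter_left_of_subset hVW (h0V b hb) (partner_subset h1W hα hb)]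
  exact congrArg (· ∩ V) hab

theorem almostDisjoint_image_union_partner (hVW : Disjoint V W) (h0 : AlmostDisjoint 𝒜₀)
    (h1 : AlmostDisjoint 𝒜₁) (h0V : ∀ a ∈ 𝒜₀, a ⊆ V) (h1W : ∀ a ∈ 𝒜₁, a ⊆ W)
    (hα : MapsTo α (𝒜₀ \ 𝒞) 𝒜₁) (hα' : InjOn α (𝒜₀ \ 𝒞)) :
    AlmostDisjoint ((fun a => a ∪ partner 𝒞 α a) '' 𝒜₀) := by
  have hinj := injOn_union_partner hVW h0V h1W hα
  refine ⟨(infinite_image_iff hinj).2 h0.1, ?_, ?_⟩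
  · rintro _ ⟨a, ha, rfl⟩
    exact (h0.2.1 a ha).mono subset_union_left
  · rintro _ ⟨a, ha, rfl⟩ _ ⟨b, hb, rfl⟩ hab
    have hab' : a ≠ b := fun h => hab (h ▸ rfl)
    have hpartner : (partner 𝒞 α a ∩ partner 𝒞 α b).Finite := by
      by_cases ha𝒞 : a ∈ 𝒞
      · simp [partner_of_mem ha𝒞]
      by_cases hb𝒞 : b ∈ 𝒞
      · simp [partner_of_mem hb𝒞]
      rw [partner_of_notMem ha𝒞, partner_of_notMem hb𝒞]
      exact h1.2.2 _ (hα ⟨ha, ha𝒞⟩) _ (hα ⟨hb, hb𝒞⟩)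
        fun h => hab' (hα' ⟨ha, ha𝒞⟩ ⟨hb, hb𝒞⟩ h)
    exact ((h0.2.2 a ha b hb hab').union hpartner).subset
      (union_inter_union_subset hVW (h0V a ha) (h0V b hb)
        (partner_subset h1W hα ha) (partner_subset h1W hα hb))

theorem adRestrict_image_union_partner (hα : MapsTo α (𝒜₀ \ 𝒞) 𝒜₁) (B : Set ℕ) :
    ADRestrict ((fun a => a ∪ partner 𝒞 α a) '' 𝒜₀) B =
      (fun a => a ∪ partner 𝒞 α a) '' (ADRestrict 𝒜₀ B ∪ (𝒜₀ \ 𝒞) ∩ α ⁻¹' ADRestrict 𝒜₁ B) := by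
  have hpartner : ∀ a ∈ 𝒜₀, (partner 𝒞 α a ∩ B).Infinite ↔
      a ∈ (𝒜₀ \ 𝒞) ∩ α ⁻¹' ADRestrict 𝒜₁ B := fun a ha => by
    by_cases ha𝒞 : a ∈ 𝒞
    · simp [partner_of_mem ha𝒞, ha𝒞]
    · simp [partner_of_notMem ha𝒞, ha, ha𝒞, ADRestrict, hα ⟨ha, ha𝒞⟩]
  ext x
  constructor
  · rintro ⟨⟨a, ha, rfl⟩, hB⟩
    rw [union_inter_distrib_right, infinite_union, hpartner a ha] at hB
    exact ⟨a, hB.imp_left fun h => ⟨ha, h⟩, rfl⟩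
  · rintro ⟨a, ha, rfl⟩
    have ha₀ : a ∈ 𝒜₀ := ha.elim (·.1) (·.1.1)
    refine ⟨⟨a, ha₀, rfl⟩, ?_⟩
    rw [union_inter_distrib_right, infinite_union, hpartner a ha₀]
    exact ha.imp_left (·.2)

theorem trueCardContinuum_image_union_partner (hVW : Disjoint V W) (h0V : ∀ a ∈ 𝒜₀, a ⊆ V)
    (h1W : ∀ a ∈ 𝒜₁, a ⊆ W) (h0c : TrueCardContinuum 𝒜₀) (h1c : TrueCardContinuum 𝒜₁)
    (hα : BijOn α (𝒜₀ \ 𝒞) 𝒜₁) :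
    TrueCardContinuum ((fun a => a ∪ partner 𝒞 α a) '' 𝒜₀) := fun B => by
  rw [adRestrict_image_union_partner hα.mapsTo]
  have hsub : ADRestrict 𝒜₀ B ∪ (𝒜₀ \ 𝒞) ∩ α ⁻¹' ADRestrict 𝒜₁ B ⊆ 𝒜₀ :=
    union_subset (fun _ h => h.1) fun _ h => h.1.1
  refine (finiteOrContinuum_image_iff
    ((injOn_union_partner hVW h0V h1W hα.mapsTo).mono hsub)).2 (FiniteOrContinuum.union (h0c B) ?_)
  rw [← finiteOrContinuum_image_iff (hα.injOn.mono inter_subset_left), image_inter_preimage,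
    hα.image_eq, inter_eq_right.2 fun _ h => h.1]
  exact h1c B

theorem inter_infinite_iff_notMem (hVW : Disjoint V W) (h𝒞V : ∀ c ∈ 𝒞, c ⊆ V)
    (hα : ∀ a ∈ 𝒜₀ \ 𝒞, (α a ∩ W).Infinite) :
    ∀ x ∈ (fun a => a ∪ α a) '' (𝒜₀ \ 𝒞) ∪ 𝒞, (x ∩ W).Infinite ↔ x ∉ 𝒞 := by
  have h𝒞W : ∀ c ∈ 𝒞, c ∩ W = ∅ := fun c hc => (hVW.mono_left (h𝒞V c hc)).inter_eq
  rintro _ (⟨a, ha, rfl⟩ | hx)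
  · have hinf := (hα a ha).mono (inter_subset_inter_left W (subset_union_right (s := a)))
    exact ⟨fun _ hx => hinf (h𝒞W _ hx ▸ finite_empty), fun _ => hinf⟩
  · simp [hx, h𝒞W _ hx]

end Gluing

theorem machine_not_almostNormal_general (V W : Set ℕ) (hdis : Disjoint V W)
    (𝒜₀ 𝒜₁ : Set (Set ℕ)) (h0 : AlmostDisjoint 𝒜₀) (h1 : AlmostDisjoint 𝒜₁)
    (h0V : ∀ a ∈ 𝒜₀, a ⊆ V) (h1W : ∀ a ∈ 𝒜₁, a ⊆ W)
    (h0c : TrueCardContinuum 𝒜₀) (h1c : TrueCardContinuum 𝒜₁)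
    (𝒞 : Set (Set ℕ)) (h𝒞 : 𝒞 ⊆ 𝒜₀) (hcc : 𝒞.Countable) (hci : 𝒞.Infinite)
    (α : Set ℕ → Set ℕ) (hα : Set.BijOn α (𝒜₀ \ 𝒞) 𝒜₁)
    (𝒜 : Set (Set ℕ)) (h𝒜 : 𝒜 = ((fun a => a ∪ α a) '' (𝒜₀ \ 𝒞)) ∪ 𝒞) :
    AlmostDisjoint 𝒜 ∧ TrueCardContinuum 𝒜 ∧
      closure (PsiNat 𝒜 W) ∩ PsiSub 𝒜 𝒜 = PsiSub 𝒜 (𝒜 \ 𝒞) ∧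
      ¬ AlmostNormal (Psi 𝒜) := by
  have h𝒜' : 𝒜 = (fun a => a ∪ partner 𝒞 α a) '' 𝒜₀ := h𝒜.trans (image_union_partner h𝒞).symm
  have hAD : AlmostDisjoint 𝒜 :=
    h𝒜' ▸ almostDisjoint_image_union_partner hdis h0 h1 h0V h1W hα.mapsTo hα.injOn
  have hTC : TrueCardContinuum 𝒜 :=
    h𝒜' ▸ trueCardContinuum_image_union_partner hdis h0V h1W h0c h1c hα
  have hW : ∀ x ∈ 𝒜, (x ∩ W).Infinite ↔ x ∉ 𝒞 := h𝒜 ▸ inter_infinite_iff_notMem hdis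
    (fun c hc => h0V c (h𝒞 hc)) fun a ha =>
      (inter_eq_left.2 (h1W _ (hα.mapsTo ha))).symm ▸ h1.2.1 _ (hα.mapsTo ha)
  have h𝒞𝒜 : 𝒞 ⊆ 𝒜 := h𝒜 ▸ subset_union_right
  exact ⟨hAD, hTC, closure_psiNat_inter_psiSub hW,
    not_almostNormal_of_inter_infinite_iff hAD.2.1 hTC h𝒞𝒜 hcc hci hW⟩

/-- the two-family machine producing a non almost-normal almost disjoint family
of true cardinality 𝔠 with cl(W) ∩ 𝒜 = 𝒜 ∖ 𝒞. -/
theorem machine_not_almostNormal (V W : Set ℕ) (hdis : Disjoint V W)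
    (hcover : V ∪ W = Set.univ) (hVinf : V.Infinite) (hWinf : W.Infinite)
    (𝒜₀ 𝒜₁ : Set (Set ℕ)) (h0 : AlmostDisjoint 𝒜₀) (h1 : AlmostDisjoint 𝒜₁)
    (h0V : ∀ a ∈ 𝒜₀, a ⊆ V) (h1W : ∀ a ∈ 𝒜₁, a ⊆ W)
    (h0c : TrueCardContinuum 𝒜₀) (h1c : TrueCardContinuum 𝒜₁)
    (𝒞 : Set (Set ℕ)) (h𝒞 : 𝒞 ⊆ 𝒜₀) (hcc : 𝒞.Countable) (hci : 𝒞.Infinite)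
    (α : Set ℕ → Set ℕ) (hα : Set.BijOn α (𝒜₀ \ 𝒞) 𝒜₁)
    (𝒜 : Set (Set ℕ)) (h𝒜 : 𝒜 = ((fun a => a ∪ α a) '' (𝒜₀ \ 𝒞)) ∪ 𝒞) :
    AlmostDisjoint 𝒜 ∧ TrueCardContinuum 𝒜 ∧
      closure (PsiNat 𝒜 W) ∩ PsiSub 𝒜 𝒜 = PsiSub 𝒜 (𝒜 \ 𝒞) ∧
      ¬ AlmostNormal (Psi 𝒜) :=
  machine_not_almostNormal_general V W hdis 𝒜₀ 𝒜₁ h0 h1 h0V h1W h0c h1c 𝒞 h𝒞 hcc hci α hα 𝒜 h𝒜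

end PsiSpace
end

section
/- If there exists a mad family of true cardinality 𝔠, then there exists a mad family ℱ of true cardinality 𝔠 such that Ψ(ℱ) is quasi-normal but not almost-normal. -/
open Set

namespace PsiSpace

/-! ### Auxiliary topology lemmas for Psi spaces -/

section PsiTopology

variable {ℱ : Set (Set ℕ)}

lemma psi_isOpen_iff {U : Set (Psi ℱ)} : IsOpen U ↔ ∀ a : {a : Set ℕ // a ∈ ℱ},
    Psi.pt a ∈ U → {n : ℕ | n ∈ a.1 ∧ Psi.nat n ∉ U}.Finite := Iff.rfl

lemma psi_nat_ne_pt {n : ℕ} {a : {a : Set ℕ // a ∈ ℱ}} :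
    (Psi.nat n : Psi ℱ) ≠ Psi.pt a := fun h => Sum.inl_ne_inr h

lemma psi_nat_inj {n m : ℕ} (h : (Psi.nat n : Psi ℱ) = Psi.nat m) : n = m :=
  Sum.inl.inj h

lemma psi_pt_inj {a b : {a : Set ℕ // a ∈ ℱ}} (h : (Psi.pt a : Psi ℱ) = Psi.pt b) : a = b :=
  Sum.inr.inj h

lemma psi_cases (x : Psi ℱ) : (∃ n, x = Psi.nat n) ∨ (∃ a, x = Psi.pt a) := by
  rcases x with n | a
  · exact Or.inl ⟨n, rfl⟩
  · exact Or.inr ⟨a, rfl⟩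

lemma nat_mem_PsiNat {n : ℕ} {W : Set ℕ} : (Psi.nat n : Psi ℱ) ∈ PsiNat ℱ W ↔ n ∈ W := by
  constructor
  · rintro ⟨m, hm, h⟩
    rwa [psi_nat_inj h]
  · exact fun h => ⟨n, h, rfl⟩

lemma pt_not_mem_PsiNat {a : {a : Set ℕ // a ∈ ℱ}} {W : Set ℕ} :
    (Psi.pt a : Psi ℱ) ∉ PsiNat ℱ W := by
  rintro ⟨m, hm, h⟩
  exact psi_nat_ne_pt h.symm

lemma pt_mem_PsiSub {a : {a : Set ℕ // a ∈ ℱ}} {𝒞 : Set (Set ℕ)} :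
    (Psi.pt a : Psi ℱ) ∈ PsiSub ℱ 𝒞 ↔ a.1 ∈ 𝒞 := by
  constructor
  · rintro ⟨b, hb, h⟩
    rwa [psi_pt_inj h]
  · exact fun h => ⟨a, h, rfl⟩

lemma nat_not_mem_PsiSub {n : ℕ} {𝒞 : Set (Set ℕ)} :
    (Psi.nat n : Psi ℱ) ∉ PsiSub ℱ 𝒞 := by
  rintro ⟨b, hb, h⟩
  exact psi_nat_ne_pt h

lemma isOpen_PsiNat (W : Set ℕ) : IsOpen (PsiNat ℱ W) := by
  intro a ha
  exact absurd ha pt_not_mem_PsiNat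

lemma isClosed_PsiSub (𝒞 : Set (Set ℕ)) : IsClosed (PsiSub ℱ 𝒞) := by
  rw [← isOpen_compl_iff]
  intro a _
  refine Set.Finite.subset Set.finite_empty ?_
  rintro n ⟨-, hn⟩
  exact absurd (not_not.mp hn) nat_not_mem_PsiSub

lemma isOpen_pt_union {a : {a : Set ℕ // a ∈ ℱ}} {W : Set ℕ} (hW : (a.1 \ W).Finite) :
    IsOpen ({Psi.pt a} ∪ PsiNat ℱ W : Set (Psi ℱ)) := by
  intro b hb
  have hba : b = a := by
    rcases hb with hb | hb
    · exact psi_pt_inj hb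
    · exact absurd hb pt_not_mem_PsiNat
  subst hba
  refine hW.subset ?_
  rintro n ⟨hn, hno⟩
  refine ⟨hn, fun hmem => hno (Or.inr (nat_mem_PsiNat.2 hmem))⟩

lemma nat_mem_closure {s : Set (Psi ℱ)} {n : ℕ} :
    (Psi.nat n : Psi ℱ) ∈ closure s ↔ Psi.nat n ∈ s := by
  constructor
  · intro h
    have hopen : IsOpen ({Psi.nat n} : Set (Psi ℱ)) := by
      intro a ha
      exact ((psi_nat_ne_pt (ha : Psi.pt a = Psi.nat n).symm)).elim
    rcases mem_closure_iff.1 h {Psi.nat n} hopen rfl with ⟨x, hx1, hx2⟩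
    rwa [show x = Psi.nat n from hx1] at hx2
  · exact fun h => subset_closure h

lemma pt_mem_closure_PsiNat {a : {a : Set ℕ // a ∈ ℱ}} {W : Set ℕ} :
    (Psi.pt a : Psi ℱ) ∈ closure (PsiNat ℱ W) ↔ (a.1 ∩ W).Infinite := by
  constructor
  · intro h hfin
    set o : Set (Psi ℱ) := {Psi.pt a} ∪ PsiNat ℱ (a.1 \ (a.1 ∩ W)) with ho_def
    have ho : IsOpen o := isOpen_pt_union (by
      rw [Set.diff_diff_right_self]
      exact hfin.subset Set.inter_subset_right)
    rcases mem_closure_iff.1 h o ho (Or.inl rfl) with ⟨x, hx1, hx2⟩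
    rcases (hx2 : ∃ m ∈ W, x = Psi.nat m) with ⟨m, hmW, rfl⟩
    rcases hx1 with hx1 | hx1
    · exact psi_nat_ne_pt (hx1 : Psi.nat m = Psi.pt a)
    · have := nat_mem_PsiNat.1 hx1
      exact this.2 ⟨this.1, hmW⟩
  · intro hinf
    rw [mem_closure_iff]
    intro o ho hao
    have hfin := ho a hao
    obtain ⟨n, hn⟩ := (hinf.diff hfin).nonempty
    refine ⟨Psi.nat n, ?_, nat_mem_PsiNat.2 hn.1.2⟩
    by_contra hno
    exact hn.2 ⟨hn.1.1, hno⟩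

end PsiTopology
section PsiRegClosed

variable {ℱ : Set (Set ℕ)}

/-- The trace of a subset of `Psi ℱ` on ℕ. -/
def natSet (R : Set (Psi ℱ)) : Set ℕ := {n | Psi.nat n ∈ R}

lemma PsiNat_natSet_subset {R : Set (Psi ℱ)} : PsiNat ℱ (natSet R) ⊆ R := by
  rintro x ⟨n, hn, rfl⟩
  exact hn

lemma RegClosed.isClosed' {R : Set (Psi ℱ)} (hR : RegClosed R) : IsClosed R := by
  rw [← hR]
  exact isClosed_closure

lemma regClosed_pt_mem {R : Set (Psi ℱ)} (hR : RegClosed R)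
    (hmem : ∀ c ∈ ℱ, Set.Infinite c) {a : {a : Set ℕ // a ∈ ℱ}} :
    Psi.pt a ∈ R ↔ (a.1 ∩ natSet R).Infinite := by
  constructor
  · intro h
    by_cases hint : Psi.pt a ∈ interior R
    · rcases mem_interior.1 hint with ⟨o, hsub, ho, hao⟩
      have hfin := ho a hao
      have hss : a.1 \ {n : ℕ | n ∈ a.1 ∧ Psi.nat n ∉ o} ⊆ a.1 ∩ natSet R := by
        intro n hn
        refine ⟨hn.1, hsub ?_⟩
        by_contra hno
        exact hn.2 ⟨hn.1, hno⟩
      exact Set.Infinite.mono hss (((hmem a.1 a.2).diff hfin))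
    · intro hfin
      set o : Set (Psi ℱ) := {Psi.pt a} ∪ PsiNat ℱ (a.1 \ (a.1 ∩ natSet R)) with ho_def
      have ho : IsOpen o := isOpen_pt_union (by
        rw [Set.diff_diff_right_self]
        exact hfin.subset Set.inter_subset_right)
      have h' : Psi.pt a ∈ closure (interior R) := by rw [hR]; exact h
      rcases mem_closure_iff.1 h' o ho (Or.inl rfl) with ⟨x, hx1, hx2⟩
      rcases hx1 with hx1 | hx1
      · exact hint (by rwa [show x = Psi.pt a from hx1] at hx2)
      · rcases (hx1 : ∃ m ∈ _, x = Psi.nat m) with ⟨m, hm, rfl⟩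
        exact hm.2 ⟨hm.1, show Psi.nat m ∈ R from interior_subset hx2⟩
  · intro hinf
    have h1 : Psi.pt a ∈ closure (PsiNat ℱ (natSet R)) := pt_mem_closure_PsiNat.2 hinf
    exact closure_minimal PsiNat_natSet_subset hR.isClosed' h1

lemma regClosed_closure_PsiNat (W : Set ℕ) : RegClosed (closure (PsiNat ℱ W)) := by
  have h1 : PsiNat ℱ W ⊆ interior (closure (PsiNat ℱ W)) :=
    (isOpen_PsiNat W).subset_interior_iff.2 subset_closure
  refine le_antisymm (closure_minimal interior_subset isClosed_closure) ?_
  exact closure_mono h1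

lemma SepOpen.symm {X : Type*} [TopologicalSpace X] {A B : Set X} (h : SepOpen A B) :
    SepOpen B A := by
  obtain ⟨U, V, hU, hV, hAU, hBV, hd⟩ := h
  exact ⟨V, U, hV, hU, hBV, hAU, hd.symm⟩

/-- The level of a subset of `Psi ℱ`: those members of ℱ whose point lies in it. -/
def levelSet (A : Set (Psi ℱ)) : Set (Set ℕ) :=
  {c : Set ℕ | ∃ h : c ∈ ℱ, Psi.pt ⟨c, h⟩ ∈ A}

lemma mem_levelSet {A : Set (Psi ℱ)} {a : {a : Set ℕ // a ∈ ℱ}} :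
    a.1 ∈ levelSet A ↔ Psi.pt a ∈ A := by
  constructor
  · rintro ⟨h, hmem⟩
    exact hmem
  · exact fun h => ⟨a.2, h⟩

lemma levelSet_subset {A : Set (Psi ℱ)} : levelSet A ⊆ ℱ := by
  rintro c ⟨h, -⟩
  exact h

/-- If a point is not in the π-closed set `⋂₀ S`, then its trace on the natural-number
part of `⋂₀ S` is finite. -/
lemma trace_finite_of_not_mem {S : Finset (Set (Psi ℱ))}
    (hS : ∀ R ∈ S, RegClosed R) (hmem : ∀ c ∈ ℱ, Set.Infinite c)
    {a : {a : Set ℕ // a ∈ ℱ}} (ha : Psi.pt a ∉ ⋂₀ (S : Set (Set (Psi ℱ)))) :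
    (a.1 ∩ natSet (⋂₀ (S : Set (Set (Psi ℱ))))).Finite := by
  have : ∃ R ∈ S, Psi.pt a ∉ R := by
    by_contra hcon
    push_neg at hcon
    exact ha (Set.mem_sInter.2 fun R hR => hcon R hR)
  obtain ⟨R, hRS, haR⟩ := this
  have h1 : (a.1 ∩ natSet R).Finite := by
    by_contra hinf
    exact haR ((regClosed_pt_mem (hS R hRS) hmem).2 hinf)
  refine h1.subset ?_
  intro n hn
  exact ⟨hn.1, Set.sInter_subset_of_mem hRS hn.2⟩

/-- Separation lemma: two disjoint π-closed sets, one of which has finite level,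
can be separated by open sets. -/
lemma sepOpen_of_level_finite
    (hAD : ∀ c ∈ ℱ, ∀ d ∈ ℱ, c ≠ d → (c ∩ d).Finite)
    (hmem : ∀ c ∈ ℱ, Set.Infinite c)
    {A B : Set (Psi ℱ)} (hA : PiClosed A) (hB : PiClosed B)
    (hd : Disjoint A B) (hfin : (levelSet A).Finite) : SepOpen A B := by
  obtain ⟨SA, hSA, rfl⟩ := hA
  obtain ⟨SB, hSB, rfl⟩ := hB
  set A := ⋂₀ (SA : Set (Set (Psi ℱ))) with hA_def
  set B := ⋂₀ (SB : Set (Set (Psi ℱ))) with hB_def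
  have hdisj : ∀ x : Psi ℱ, x ∈ A → x ∈ B → False := fun x h1 h2 =>
    Set.disjoint_left.1 hd h1 h2
  set L : Set (Set ℕ) := levelSet A with hL_def
  set X : Set ℕ := (natSet A ∪ ⋃₀ L) \ natSet B with hX_def
  refine ⟨PsiNat ℱ X ∪ PsiSub ℱ L, PsiNat ℱ Xᶜ ∪ PsiSub ℱ (ℱ \ L), ?_, ?_, ?_, ?_, ?_⟩
  · -- U is open
    intro a haU
    have haA : Psi.pt a ∈ A := by
      rcases haU with h | h
      · exact absurd h pt_not_mem_PsiNat
      · exact mem_levelSet.1 (pt_mem_PsiSub.1 h)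
    have haB : Psi.pt a ∉ B := fun h => hdisj _ haA h
    have h2 : (a.1 ∩ natSet B).Finite := trace_finite_of_not_mem hSB hmem haB
    refine h2.subset ?_
    rintro n ⟨hna, hnU⟩
    have hnX : n ∉ X := fun h => hnU (Or.inl (nat_mem_PsiNat.2 h))
    have hn1 : n ∈ natSet A ∪ ⋃₀ L := Or.inr ⟨a.1, mem_levelSet.2 haA, hna⟩
    refine ⟨hna, ?_⟩
    by_contra hnB
    exact hnX ⟨hn1, hnB⟩
  · -- V is open
    intro a haV
    have haL : a.1 ∉ L := by
      rcases haV with h | h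
      · exact absurd h pt_not_mem_PsiNat
      · exact (pt_mem_PsiSub.1 h).2
    have haA : Psi.pt a ∉ A := fun h => haL (mem_levelSet.2 h)
    have h1 : (a.1 ∩ natSet A).Finite := trace_finite_of_not_mem hSA hmem haA
    have h2 : (a.1 ∩ ⋃₀ L).Finite := by
      have hbu : (⋃ c ∈ L, a.1 ∩ c).Finite :=
        hfin.biUnion fun c hc => hAD a.1 a.2 c (levelSet_subset hc) (fun h => haL (h ▸ hc))
      refine hbu.subset ?_
      rintro n ⟨hna, c, hc, hnc⟩
      exact Set.mem_biUnion hc ⟨hna, hnc⟩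
    refine (h1.union h2).subset ?_
    rintro n ⟨hna, hnV⟩
    have hnX : n ∈ X := by
      by_contra h
      exact hnV (Or.inl (nat_mem_PsiNat.2 h))
    rcases hnX.1 with h | h
    · exact Or.inl ⟨hna, h⟩
    · exact Or.inr ⟨hna, h⟩
  · -- A ⊆ U
    intro x hx
    rcases psi_cases x with ⟨n, rfl⟩ | ⟨a, rfl⟩
    · refine Or.inl (nat_mem_PsiNat.2 ⟨Or.inl hx, ?_⟩)
      intro hnB
      exact hdisj _ hx hnB
    · exact Or.inr (pt_mem_PsiSub.2 (mem_levelSet.2 hx))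
  · -- B ⊆ V
    intro x hx
    rcases psi_cases x with ⟨n, rfl⟩ | ⟨a, rfl⟩
    · refine Or.inl (nat_mem_PsiNat.2 ?_)
      intro hX
      exact hX.2 hx
    · refine Or.inr (pt_mem_PsiSub.2 ⟨a.2, ?_⟩)
      intro hL
      exact hdisj _ (mem_levelSet.1 hL) hx
  · -- disjointness
    rw [Set.disjoint_left]
    rintro x (hx | hx) (hy | hy)
    · rcases (hx : ∃ n ∈ X, x = Psi.nat n) with ⟨n, hn, rfl⟩
      exact (nat_mem_PsiNat.1 hy) hn
    · rcases (hx : ∃ n ∈ X, x = Psi.nat n) with ⟨n, hn, rfl⟩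
      exact nat_not_mem_PsiSub hy
    · rcases (hx : ∃ b, b.1 ∈ L ∧ x = Psi.pt b) with ⟨b, hb, rfl⟩
      exact pt_not_mem_PsiNat hy
    · rcases (hx : ∃ b, b.1 ∈ L ∧ x = Psi.pt b) with ⟨b, hb, rfl⟩
      rcases (hy : ∃ b, b.1 ∈ ℱ \ L ∧ _ = Psi.pt b) with ⟨b', hb', heq⟩
      rw [psi_pt_inj heq] at hb
      exact hb'.2 hb

end PsiRegClosed
/-! ### Cardinality tools -/

section CardTools

open Cardinal

lemma mk_setNat : #(Set ℕ) = Cardinal.continuum := by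
  rw [Cardinal.mk_set, Cardinal.mk_nat, Cardinal.two_power_aleph0]

lemma mk_subset_setNat_le (s : Set (Set ℕ)) : #s ≤ Cardinal.continuum := by
  rw [← mk_setNat]
  exact Cardinal.mk_set_le s

/-- Transfinite choice of distinct representatives: given at most continuum many
sets each of size continuum, we can choose distinct elements from them. -/
lemma exists_injective_choice {ι : Type} (S : ι → Set (Set ℕ))
    (hι : #ι ≤ Cardinal.continuum) (hS : ∀ i, Cardinal.continuum ≤ #(S i)) :
    ∃ f : ι → Set ℕ, Function.Injective f ∧ ∀ i, f i ∈ S i := by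
  by_cases hne : Nonempty ι
  · set β := Cardinal.continuum.ord.ToType with hβ
    obtain ⟨e⟩ : Nonempty (ι ↪ β) := by
      rw [← Cardinal.le_def, Cardinal.mk_ord_toType]
      exact hι
    set g : β → ι := Function.invFun e with hg
    have hwf : WellFounded ((· < ·) : β → β → Prop) := IsWellFounded.wf
    have hstep : ∀ (b : β) (ih : ∀ y : β, y < b → Set ℕ),
        ∃ x, x ∈ S (g b) ∧ ¬∃ (y : β) (h : y < b), ih y h = x := by
      intro b ih
      set T : Set (Set ℕ) := Set.range (fun p : {y : β // y < b} => ih p.1 p.2) with hT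
      have hTcard : #T < Cardinal.continuum := by
        refine lt_of_le_of_lt (Cardinal.mk_range_le) ?_
        have : #{y : β // y < b} = #(Set.Iio b) := by rfl
        rw [this]
        exact Cardinal.mk_Iio_ord_toType b
      have : ¬ (S (g b) ⊆ T) := by
        intro hsub
        exact absurd (le_trans (hS (g b)) (Cardinal.mk_le_mk_of_subset hsub)) hTcard.not_ge
      obtain ⟨x, hxS, hxT⟩ := Set.not_subset.1 this
      refine ⟨x, hxS, ?_⟩
      rintro ⟨y, hy, rfl⟩
      exact hxT ⟨⟨y, hy⟩, rfl⟩
    set F : β → Set ℕ := hwf.fix (fun b ih => (hstep b ih).choose) with hF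
    have hFeq : ∀ b, F b = (hstep b (fun y _ => F y)).choose :=
      fun b => hwf.fix_eq (fun b ih => (hstep b ih).choose) b
    have hFspec : ∀ b : β, F b ∈ S (g b) ∧ ¬∃ (y : β) (h : y < b), F y = F b := by
      intro b
      have hc := (hstep b (fun y _ => F y)).choose_spec
      constructor
      · rw [hFeq b]
        exact hc.1
      · rintro ⟨y, h, heq⟩
        rw [hFeq b] at heq
        exact hc.2 ⟨y, h, heq⟩
    refine ⟨fun i => F (e i), ?_, ?_⟩
    · intro i j hij
      by_contra hne'
      have heij : e i ≠ e j := fun h => hne' (e.injective h)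
      rcases lt_or_gt_of_ne heij with h | h
      · exact (hFspec (e j)).2 ⟨e i, h, hij⟩
      · exact (hFspec (e i)).2 ⟨e j, h, hij.symm⟩
    · intro i
      have := (hFspec (e i)).1
      rwa [hg, Function.leftInverse_invFun e.injective i] at this
  · exact ⟨fun i => (hne ⟨i⟩).elim, fun i => (hne ⟨i⟩).elim, fun i => (hne ⟨i⟩).elim⟩

end CardTools
/-! ### The construction of the special mad family -/

/-- Slots indexing the choices of "donor" members of the reservoir mad family.
First component: splitter slots (one for each finite family of subsets of ℕ together
with a chosen element); then crossing slots (two kinds) and trimmed slots. -/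
abbrev Slot : Type := (Finset (Set ℕ) × Set ℕ) ⊕ (Set ℕ ⊕ (Set ℕ ⊕ Set ℕ))

/-- A finite family of subsets of ℕ is good if every member of it has infinite trace. -/
def TaskGood (𝒜 : Set (Set ℕ)) (t : Finset (Set ℕ)) : Prop :=
  ∀ V ∈ t, (ADRestrict 𝒜 V).Infinite

/-- The set that the donor of a slot will be intersected with. -/
def pieceY (Wst : Set ℕ) : Slot → Set ℕ
  | .inl (_, W) => W
  | .inr (.inl _) => Wst
  | .inr (.inr (.inl _)) => Wstᶜ
  | .inr (.inr (.inr X)) => (Wst ∪ X)ᶜ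

/-- Whether a slot is active, i.e. will contribute a piece to a member of the family. -/
def SlotActive (𝒜 : Set (Set ℕ)) (Wst : Set ℕ) : Slot → Prop
  | .inl (t, W) => W ∈ t ∧ TaskGood 𝒜 t
  | .inr (.inl _) => True
  | .inr (.inr (.inl _)) => True
  | .inr (.inr (.inr X)) => (ADRestrict 𝒜 (Wst ∪ X)ᶜ).Infinite

/-- The set from which the donor of a slot must be chosen. -/
def slotSet (𝒜 : Set (Set ℕ)) (Wst : Set ℕ) (s : Slot) : Set (Set ℕ) :=
  {a | a ∈ 𝒜 ∧ (SlotActive 𝒜 Wst s → (a ∩ pieceY Wst s).Infinite)}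

/-- The piece contributed by a slot, given a donor choice `f`. -/
def piece (f : Slot → Set ℕ) (Wst : Set ℕ) (s : Slot) : Set ℕ := f s ∩ pieceY Wst s

/-- Origins of members of the family. -/
abbrev Orig : Type := Finset (Set ℕ) ⊕ (Set ℕ ⊕ (Set ℕ ⊕ Set ℕ))

/-- The part of a reservoir member used up in pieces. -/
def cutSet (𝒜 : Set (Set ℕ)) (Wst : Set ℕ) (f : Slot → Set ℕ) (a : Set ℕ) : Set ℕ :=
  ⋃ s ∈ {s : Slot | SlotActive 𝒜 Wst s ∧ f s = a}, piece f Wst s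

/-- The member of the constructed family corresponding to an origin. -/
def origMem (𝒜 : Set (Set ℕ)) (Wst : Set ℕ) (f : Slot → Set ℕ) : Orig → Set ℕ
  | .inl t => ⋃ W ∈ t, piece f Wst (.inl (t, W))
  | .inr (.inl η) => piece f Wst (.inr (.inl η)) ∪ piece f Wst (.inr (.inr (.inl η)))
  | .inr (.inr (.inl X)) => piece f Wst (.inr (.inr (.inr X)))
  | .inr (.inr (.inr a)) => a \ cutSet 𝒜 Wst f a

/-- Which origins give rise to actual members. -/
def OrigOK (𝒜 : Set (Set ℕ)) (Wst : Set ℕ) (f : Slot → Set ℕ) : Orig → Prop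
  | .inl t => t.Nonempty ∧ TaskGood 𝒜 t
  | .inr (.inl _) => True
  | .inr (.inr (.inl X)) => (ADRestrict 𝒜 (Wst ∪ X)ᶜ).Infinite
  | .inr (.inr (.inr a)) => a ∈ 𝒜 ∧ (a \ cutSet 𝒜 Wst f a).Infinite

/-- The constructed almost disjoint family. -/
def Fam (𝒜 : Set (Set ℕ)) (Wst : Set ℕ) (f : Slot → Set ℕ) : Set (Set ℕ) :=
  {m | ∃ o : Orig, OrigOK 𝒜 Wst f o ∧ m = origMem 𝒜 Wst f o}

/-- The donors of an origin. -/
def donors (f : Slot → Set ℕ) : Orig → Set (Set ℕ)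
  | .inl t => (fun W => f (.inl (t, W))) '' (t : Set (Set ℕ))
  | .inr (.inl η) => {f (.inr (.inl η)), f (.inr (.inr (.inl η)))}
  | .inr (.inr (.inl X)) => {f (.inr (.inr (.inr X)))}
  | .inr (.inr (.inr a)) => {a}

/-- The origin that a slot contributes to. -/
def slotOrig : Slot → Orig
  | .inl (t, _) => .inl t
  | .inr (.inl η) => .inr (.inl η)
  | .inr (.inr (.inl η)) => .inr (.inl η)
  | .inr (.inr (.inr X)) => .inr (.inr (.inl X))

section ConstructionFacts

variable {𝒜 : Set (Set ℕ)} {Wst : Set ℕ} {f : Slot → Set ℕ}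

-- Basic facts we assume throughout: madness, true cardinality, the splitting set,
-- and the injective choice of donors.
variable (hmad : MadFamily 𝒜) (htc : TrueCardContinuum 𝒜)
  (hW1 : (ADRestrict 𝒜 Wst).Infinite) (hW2 : (ADRestrict 𝒜 Wstᶜ).Infinite)
  (hfinj : Function.Injective f) (hfmem : ∀ s, f s ∈ slotSet 𝒜 Wst s)

include hfmem in
lemma donor_mem_A (s : Slot) : f s ∈ 𝒜 := (hfmem s).1

include hfmem in
lemma piece_infinite {s : Slot} (hs : SlotActive 𝒜 Wst s) : (piece f Wst s).Infinite :=
  (hfmem s).2 hs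

lemma piece_subset_donor (s : Slot) : piece f Wst s ⊆ f s := Set.inter_subset_left

lemma piece_subset_Y (s : Slot) : piece f Wst s ⊆ pieceY Wst s := Set.inter_subset_right

include hmad hfinj hfmem in
lemma piece_inter_piece {s s' : Slot} (h : s ≠ s') :
    (piece f Wst s ∩ piece f Wst s').Finite := by
  have h1 : f s ≠ f s' := fun he => h (hfinj he)
  have := hmad.1.2.2 (f s) (donor_mem_A hfmem s) (f s') (donor_mem_A hfmem s') h1
  exact this.subset (Set.inter_subset_inter (piece_subset_donor s) (piece_subset_donor s'))

include hmad hfmem in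
lemma piece_inter_other {s : Slot} {b : Set ℕ} (hb : b ∈ 𝒜) (hne : f s ≠ b) :
    (piece f Wst s ∩ b).Finite := by
  have := hmad.1.2.2 (f s) (donor_mem_A hfmem s) b hb hne
  exact this.subset (Set.inter_subset_inter (piece_subset_donor s) (le_refl b))

include hfinj in
lemma cutSet_eq_of_slot {s₀ : Slot} (h : SlotActive 𝒜 Wst s₀) {a : Set ℕ} (ha : f s₀ = a) :
    cutSet 𝒜 Wst f a = piece f Wst s₀ := by
  apply Set.eq_of_subset_of_subset
  · intro x hx
    simp only [cutSet, Set.mem_iUnion] at hx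
    obtain ⟨s, ⟨hs1, hs2⟩, hx⟩ := hx
    have : s = s₀ := hfinj (hs2.trans ha.symm)
    rwa [this] at hx
  · intro x hx
    simp only [cutSet, Set.mem_iUnion]
    exact ⟨s₀, ⟨h, ha⟩, hx⟩

lemma cutSet_eq_empty {a : Set ℕ} (h : ∀ s : Slot, ¬(SlotActive 𝒜 Wst s ∧ f s = a)) :
    cutSet 𝒜 Wst f a = ∅ := by
  apply Set.eq_empty_of_forall_notMem
  intro x hx
  simp only [cutSet, Set.mem_iUnion] at hx
  obtain ⟨s, hs, -⟩ := hx
  exact h s hs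

lemma cutSet_subset {a : Set ℕ} : cutSet 𝒜 Wst f a ⊆ a := by
  intro x hx
  simp only [cutSet, Set.mem_iUnion] at hx
  obtain ⟨s, ⟨-, rfl⟩, hx⟩ := hx
  exact piece_subset_donor s hx

include hfinj in
lemma cutSet_cases (a : Set ℕ) : cutSet 𝒜 Wst f a = ∅ ∨
    ∃ s₀ : Slot, SlotActive 𝒜 Wst s₀ ∧ f s₀ = a ∧ cutSet 𝒜 Wst f a = piece f Wst s₀ := by
  by_cases h : ∃ s₀ : Slot, SlotActive 𝒜 Wst s₀ ∧ f s₀ = a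
  · obtain ⟨s₀, h1, h2⟩ := h
    exact Or.inr ⟨s₀, h1, h2, cutSet_eq_of_slot hfinj h1 h2⟩
  · push_neg at h
    exact Or.inl (cutSet_eq_empty fun s hs => h s hs.1 hs.2)

/-- A piece of an active slot is contained in the member generated by its origin. -/
lemma piece_subset_origMem {s : Slot} (hs : SlotActive 𝒜 Wst s) :
    piece f Wst s ⊆ origMem 𝒜 Wst f (slotOrig s) := by
  rcases s with ⟨t, W⟩ | (η | (η | X))
  · exact Set.subset_biUnion_of_mem (u := fun W => piece f Wst (.inl (t, W))) hs.1
  · exact Set.subset_union_left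
  · exact Set.subset_union_right
  · exact subset_rfl

/-- The origin of an active slot is OK. -/
lemma slotOrig_ok {s : Slot} (hs : SlotActive 𝒜 Wst s) :
    OrigOK 𝒜 Wst f (slotOrig s) := by
  rcases s with ⟨t, W⟩ | (η | (η | X))
  · exact ⟨⟨W, hs.1⟩, hs.2⟩
  · trivial
  · trivial
  · exact hs

end ConstructionFacts
/-- The set of slots belonging to an origin. -/
def origSlots : Orig → Set Slot
  | .inl t => (fun W => (Sum.inl (t, W) : Slot)) '' (t : Set (Set ℕ))
  | .inr (.inl η) => {Sum.inr (Sum.inl η), Sum.inr (Sum.inr (Sum.inl η))}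
  | .inr (.inr (.inl X)) => {Sum.inr (Sum.inr (Sum.inr X))}
  | .inr (.inr (.inr _)) => ∅

section ConstructionFacts2

variable {𝒜 : Set (Set ℕ)} {Wst : Set ℕ} {f : Slot → Set ℕ}
variable (hmad : MadFamily 𝒜) (htc : TrueCardContinuum 𝒜)
  (hW1 : (ADRestrict 𝒜 Wst).Infinite) (hW2 : (ADRestrict 𝒜 Wstᶜ).Infinite)
  (hfinj : Function.Injective f) (hfmem : ∀ s, f s ∈ slotSet 𝒜 Wst s)

lemma donors_finite (o : Orig) : (donors f o).Finite := by
  rcases o with t | (η | (X | a))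
  · exact (t.finite_toSet).image _
  · exact (Set.finite_singleton _).insert _
  · exact Set.finite_singleton _
  · exact Set.finite_singleton _

include hfmem in
lemma donors_subset (o : Orig) (ho : OrigOK 𝒜 Wst f o) : donors f o ⊆ 𝒜 := by
  rcases o with t | (η | (X | a))
  · rintro x ⟨W, -, rfl⟩
    exact donor_mem_A hfmem _
  · rintro x (rfl | rfl)
    · exact donor_mem_A hfmem _
    · exact donor_mem_A hfmem _
  · rintro x rfl
    exact donor_mem_A hfmem _
  · rintro x rfl
    exact ho.1

lemma origMem_subset_donors (o : Orig) :
    origMem 𝒜 Wst f o ⊆ ⋃₀ donors f o := by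
  rcases o with t | (η | (X | a))
  · intro x hx
    simp only [origMem, Set.mem_iUnion] at hx
    obtain ⟨W, hW, hx⟩ := hx
    exact ⟨f (.inl (t, W)), ⟨W, hW, rfl⟩, piece_subset_donor _ hx⟩
  · rintro x (hx | hx)
    · exact ⟨_, Or.inl rfl, piece_subset_donor _ hx⟩
    · exact ⟨_, Or.inr rfl, piece_subset_donor _ hx⟩
  · intro x hx
    exact ⟨_, rfl, piece_subset_donor _ hx⟩
  · intro x hx
    exact ⟨a, rfl, hx.1⟩

lemma origSlots_finite (o : Orig) : (origSlots o).Finite := by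
  rcases o with t | (η | (X | a))
  · exact (t.finite_toSet).image _
  · exact (Set.finite_singleton _).insert _
  · exact Set.finite_singleton _
  · exact Set.finite_empty

lemma origSlots_orig {o : Orig} {s : Slot} (hs : s ∈ origSlots o) : slotOrig s = o := by
  rcases o with t | (η | (X | a))
  · obtain ⟨W, -, rfl⟩ := hs
    rfl
  · rcases hs with rfl | rfl <;> rfl
  · rcases hs with rfl
    rfl
  · exact absurd hs (Set.notMem_empty s)

lemma origSlots_active {o : Orig} {s : Slot} (ho : OrigOK 𝒜 Wst f o)
    (hs : s ∈ origSlots o) : SlotActive 𝒜 Wst s := by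
  rcases o with t | (η | (X | a))
  · obtain ⟨W, hW, rfl⟩ := hs
    exact ⟨hW, ho.2⟩
  · rcases hs with rfl | rfl <;> trivial
  · rcases hs with rfl
    exact ho
  · exact absurd hs (Set.notMem_empty s)

lemma origMem_subset_pieces {o : Orig} (ho : ∀ b, o ≠ .inr (.inr (.inr b))) :
    origMem 𝒜 Wst f o ⊆ ⋃ s ∈ origSlots o, piece f Wst s := by
  rcases o with t | (η | (X | a))
  · intro x hx
    simp only [origMem, Set.mem_iUnion] at hx ⊢
    obtain ⟨W, hW, hx⟩ := hx
    exact ⟨.inl (t, W), ⟨W, hW, rfl⟩, hx⟩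
  · rintro x (hx | hx) <;> simp only [Set.mem_iUnion]
    · exact ⟨_, Or.inl rfl, hx⟩
    · exact ⟨_, Or.inr rfl, hx⟩
  · intro x hx
    simp only [Set.mem_iUnion]
    exact ⟨_, rfl, hx⟩
  · exact absurd rfl (ho a)

-- Intersection of an active piece with a remainder-type member is finite.
include hmad hfinj hfmem in
lemma piece_inter_rem {s : Slot} (hs : SlotActive 𝒜 Wst s) {a : Set ℕ} (ha : a ∈ 𝒜) :
    (piece f Wst s ∩ (a \ cutSet 𝒜 Wst f a)).Finite := by
  by_cases h : f s = a
  · have hsub : piece f Wst s ⊆ cutSet 𝒜 Wst f a := by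
      rw [cutSet_eq_of_slot hfinj hs h]
    rw [Set.eq_empty_of_forall_notMem (s := piece f Wst s ∩ (a \ cutSet 𝒜 Wst f a))
      (fun x hx => hx.2.2 (hsub hx.1))]
    exact Set.finite_empty
  · exact (piece_inter_other hmad hfmem ha h).subset
      (Set.inter_subset_inter subset_rfl Set.diff_subset)

-- Intersection of an active piece with the member of a different origin is finite.
include hmad hfinj hfmem in
lemma piece_inter_origMem {s : Slot} {o : Orig} (hs : SlotActive 𝒜 Wst s)
    (hne : slotOrig s ≠ o) (ho : OrigOK 𝒜 Wst f o) :
    (piece f Wst s ∩ origMem 𝒜 Wst f o).Finite := by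
  by_cases hrm : ∃ b, o = .inr (.inr (.inr b))
  · obtain ⟨b, rfl⟩ := hrm
    exact piece_inter_rem hmad hfinj hfmem hs ho.1
  · push_neg at hrm
    have hsub : piece f Wst s ∩ origMem 𝒜 Wst f o ⊆
        ⋃ s' ∈ origSlots o, piece f Wst s ∩ piece f Wst s' := by
      intro x ⟨hx1, hx2⟩
      have := origMem_subset_pieces (fun b hb => hrm b hb) hx2
      simp only [Set.mem_iUnion] at this ⊢
      obtain ⟨s', hs', hx2'⟩ := this
      exact ⟨s', hs', hx1, hx2'⟩
    refine ((origSlots_finite o).biUnion fun s' hs' =>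
      piece_inter_piece hmad hfinj hfmem ?_).subset hsub
    intro he
    rw [he] at hne
    exact hne (origSlots_orig hs')

-- Members with distinct origins have finite intersection.
include hmad hfinj hfmem in
lemma origMem_inter_finite {o o' : Orig} (h : o ≠ o') (ho : OrigOK 𝒜 Wst f o)
    (ho' : OrigOK 𝒜 Wst f o') :
    (origMem 𝒜 Wst f o ∩ origMem 𝒜 Wst f o').Finite := by
  by_cases hrm : ∃ b, o = .inr (.inr (.inr b))
  · obtain ⟨a, rfl⟩ := hrm
    by_cases hrm' : ∃ b, o' = .inr (.inr (.inr b))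
    · obtain ⟨b, rfl⟩ := hrm'
      have hab : a ≠ b := fun he => h (by rw [he])
      have := hmad.1.2.2 a ho.1 b ho'.1 hab
      exact this.subset (Set.inter_subset_inter Set.diff_subset Set.diff_subset)
    · push_neg at hrm'
      have hsub : origMem 𝒜 Wst f (.inr (.inr (.inr a))) ∩ origMem 𝒜 Wst f o' ⊆
          ⋃ s' ∈ origSlots o', piece f Wst s' ∩ (a \ cutSet 𝒜 Wst f a) := by
        intro x ⟨hx1, hx2⟩
        have := origMem_subset_pieces (fun b hb => hrm' b hb) hx2
        simp only [Set.mem_iUnion] at this ⊢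
        obtain ⟨s', hs', hx2'⟩ := this
        exact ⟨s', hs', hx2', hx1⟩
      refine ((origSlots_finite o').biUnion fun s' hs' =>
        piece_inter_rem hmad hfinj hfmem (origSlots_active ho' hs') ho.1).subset hsub
  · push_neg at hrm
    have hsub : origMem 𝒜 Wst f o ∩ origMem 𝒜 Wst f o' ⊆
        ⋃ s ∈ origSlots o, piece f Wst s ∩ origMem 𝒜 Wst f o' := by
      intro x ⟨hx1, hx2⟩
      have := origMem_subset_pieces (fun b hb => hrm b hb) hx1
      simp only [Set.mem_iUnion] at this ⊢
      obtain ⟨s, hs, hx1'⟩ := this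
      exact ⟨s, hs, hx1', hx2⟩
    refine ((origSlots_finite o).biUnion fun s hs =>
      piece_inter_origMem hmad hfinj hfmem (origSlots_active ho hs) ?_ ho').subset hsub
    rw [origSlots_orig hs]
    exact h

-- Members are infinite.
include hfmem in
lemma origMem_infinite {o : Orig} (ho : OrigOK 𝒜 Wst f o) :
    (origMem 𝒜 Wst f o).Infinite := by
  rcases o with t | (η | (X | a))
  · obtain ⟨W, hW⟩ := ho.1
    refine ((piece_infinite hfmem (s := .inl (t, W)) ⟨hW, ho.2⟩).mono ?_)
    exact Set.subset_biUnion_of_mem (u := fun W => piece f Wst (.inl (t, W))) hW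
  · exact (piece_infinite hfmem (s := .inr (.inl η)) trivial).mono Set.subset_union_left
  · exact piece_infinite hfmem ho
  · exact ho.2

end ConstructionFacts2
section ConstructionFacts3

open Cardinal

variable {𝒜 : Set (Set ℕ)} {Wst : Set ℕ} {f : Slot → Set ℕ}
variable (hmad : MadFamily 𝒜) (htc : TrueCardContinuum 𝒜)
  (hW1 : (ADRestrict 𝒜 Wst).Infinite) (hW2 : (ADRestrict 𝒜 Wstᶜ).Infinite)
  (hfinj : Function.Injective f) (hfmem : ∀ s, f s ∈ slotSet 𝒜 Wst s)

lemma origMem_mem_Fam {o : Orig} (ho : OrigOK 𝒜 Wst f o) :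
    origMem 𝒜 Wst f o ∈ Fam 𝒜 Wst f := ⟨o, ho, rfl⟩

include hmad hfinj hfmem in
lemma Fam_almostDisjoint : AlmostDisjoint (Fam 𝒜 Wst f) := by
  refine ⟨?_, ?_, ?_⟩
  · -- infinite
    have hinj : Function.Injective
        (fun η : Set ℕ => origMem 𝒜 Wst f (.inr (.inl η))) := by
      intro η η' he
      by_contra hne
      have hone : (Sum.inr (Sum.inl η) : Orig) ≠ Sum.inr (Sum.inl η') := by
        intro hc
        exact hne (Sum.inl.inj (Sum.inr.inj hc))
      have he' : origMem 𝒜 Wst f (.inr (.inl η)) = origMem 𝒜 Wst f (.inr (.inl η')) := he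
      have h1 := origMem_inter_finite hmad hfinj hfmem hone trivial trivial
      rw [he', Set.inter_self] at h1
      exact origMem_infinite hfmem (o := .inr (.inl η')) trivial h1
    exact Set.infinite_of_injective_forall_mem hinj
      (fun η => origMem_mem_Fam (o := .inr (.inl η)) trivial)
  · -- all members infinite
    rintro m ⟨o, ho, rfl⟩
    exact origMem_infinite hfmem ho
  · -- pairwise a.d.
    rintro m ⟨o, ho, rfl⟩ m' ⟨o', ho', rfl⟩ hne
    have hoo : o ≠ o' := fun hc => hne (by rw [hc])
    exact origMem_inter_finite hmad hfinj hfmem hoo ho ho'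

include hmad hfinj hfmem in
lemma Fam_mad : MadFamily (Fam 𝒜 Wst f) := by
  refine ⟨Fam_almostDisjoint hmad hfinj hfmem, ?_⟩
  intro X hX
  obtain ⟨a, ha, haX⟩ := hmad.2 X hX
  rcases cutSet_cases (f := f) hfinj a with hcut | ⟨s₀, hact, hfs, hcut⟩
  · refine ⟨a \ cutSet 𝒜 Wst f a, origMem_mem_Fam (o := .inr (.inr (.inr a)))
      ⟨ha, ?_⟩, ?_⟩
    · rw [hcut, Set.diff_empty]
      exact hmad.1.2.1 a ha
    · show ((a \ cutSet 𝒜 Wst f a) ∩ X).Infinite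
      rw [hcut, Set.diff_empty]
      exact haX
  · by_cases hc : (cutSet 𝒜 Wst f a ∩ X).Infinite
    · refine ⟨origMem 𝒜 Wst f (slotOrig s₀), origMem_mem_Fam (slotOrig_ok hact), ?_⟩
      refine hc.mono ?_
      rw [hcut]
      exact Set.inter_subset_inter (piece_subset_origMem hact) subset_rfl
    · have hinf : ((a \ cutSet 𝒜 Wst f a) ∩ X).Infinite := by
        refine ((haX.diff (Set.not_infinite.mp hc)).mono ?_)
        rintro x ⟨⟨hxa, hxX⟩, hxc⟩
        exact ⟨⟨hxa, fun hcut' => hxc ⟨hcut', hxX⟩⟩, hxX⟩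
      refine ⟨a \ cutSet 𝒜 Wst f a, origMem_mem_Fam (o := .inr (.inr (.inr a)))
        ⟨ha, hinf.mono Set.inter_subset_left⟩, hinf⟩

/-- Pigeonhole: an infinite set covered by finitely many sets meets one of them
in an infinite set. -/
lemma exists_infinite_piece {D : Set (Set ℕ)} (hD : D.Finite) {T : Set ℕ}
    (hT : T.Infinite) (hsub : T ⊆ ⋃₀ D) : ∃ d ∈ D, (T ∩ d).Infinite := by
  by_contra hcon
  push_neg at hcon
  have : T ⊆ ⋃ d ∈ D, T ∩ d := by
    intro x hx
    obtain ⟨d, hd, hxd⟩ := hsub hx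
    simp only [Set.mem_iUnion]
    exact ⟨d, hd, hx, hxd⟩
  exact hT ((hD.biUnion hcon).subset this)

-- if a member meets b ∈ 𝒜 infinitely, then b is one of its donors
include hfmem in
lemma donor_of_inter_infinite {o : Orig} (ho : OrigOK 𝒜 Wst f o) {b : Set ℕ}
    (hb : b ∈ 𝒜) (hAD : ∀ c ∈ 𝒜, ∀ d ∈ 𝒜, c ≠ d → (c ∩ d).Finite)
    (hinf : (origMem 𝒜 Wst f o ∩ b).Infinite) : b ∈ donors f o := by
  obtain ⟨d, hd, hdinf⟩ := exists_infinite_piece (donors_finite o) hinf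
    (fun x hx => origMem_subset_donors o hx.1)
  by_contra hbd
  have hdb : d ≠ b := fun he => hbd (he ▸ hd)
  have := hAD d (donors_subset hfmem o ho hd) b hb hdb
  exact hdinf (this.subset (fun x hx => ⟨hx.2, hx.1.2⟩))

/-- The set of member-donors is controlled: origins with a given donor. -/
lemma donors_elim {a : Set ℕ} {o : Orig} (h : a ∈ donors f o) :
    o = .inr (.inr (.inr a)) ∨ ∃ s ∈ origSlots o, f s = a := by
  rcases o with t | (η | (X | b))
  · obtain ⟨W, hW, he⟩ := h
    exact Or.inr ⟨.inl (t, W), ⟨W, hW, rfl⟩, he⟩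
  · simp only [donors, Set.mem_insert_iff, Set.mem_singleton_iff] at h
    rcases h with he | he
    · exact Or.inr ⟨.inr (.inl η), Or.inl rfl, he.symm⟩
    · exact Or.inr ⟨.inr (.inr (.inl η)), Or.inr rfl, he.symm⟩
  · have he := Set.mem_singleton_iff.1 h
    exact Or.inr ⟨.inr (.inr (.inr X)), rfl, he.symm⟩
  · have he := Set.mem_singleton_iff.1 h
    exact Or.inl (by rw [he])

-- only finitely many members of Fam meet a given a ∈ 𝒜 infinitely
include hmad hfinj hfmem in
lemma members_meeting_donor_finite {a : Set ℕ} (ha : a ∈ 𝒜) :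
    {m | m ∈ Fam 𝒜 Wst f ∧ (m ∩ a).Infinite}.Finite := by
  by_cases hex : ∃ s, SlotActive 𝒜 Wst s ∧ f s = a
  · obtain ⟨s₀, hact₀, hfs₀⟩ := hex
    refine (Set.Finite.insert (origMem 𝒜 Wst f (slotOrig s₀))
      (Set.finite_singleton (a \ cutSet 𝒜 Wst f a))).subset ?_
    rintro m ⟨⟨o, ho, rfl⟩, hinf⟩
    have hdon := donor_of_inter_infinite hfmem ho ha hmad.1.2.2 hinf
    rcases donors_elim hdon with rfl | ⟨s, hs, hfs⟩
    · exact Or.inr rfl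
    · have hseq : s = s₀ := hfinj (hfs.trans hfs₀.symm)
      rw [← origSlots_orig hs, hseq]
      exact Or.inl rfl
  · refine (Set.finite_singleton (a \ cutSet 𝒜 Wst f a)).subset ?_
    rintro m ⟨⟨o, ho, rfl⟩, hinf⟩
    have hdon := donor_of_inter_infinite hfmem ho ha hmad.1.2.2 hinf
    rcases donors_elim hdon with rfl | ⟨s, hs, hfs⟩
    · exact rfl
    · exact absurd ⟨origSlots_active ho hs, hfs⟩ (not_exists.1 hex s)

include hmad hfinj hfmem in
lemma trace_Fam_to_A {B : Set ℕ} (h : (ADRestrict (Fam 𝒜 Wst f) B).Infinite) :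
    (ADRestrict 𝒜 B).Infinite := by
  by_contra hfin
  rw [Set.not_infinite] at hfin
  have hsub : ADRestrict (Fam 𝒜 Wst f) B ⊆
      ⋃ a ∈ ADRestrict 𝒜 B, {m | m ∈ Fam 𝒜 Wst f ∧ (m ∩ a).Infinite} := by
    rintro m ⟨hmF, hmB⟩
    obtain ⟨o, ho, rfl⟩ := hmF
    obtain ⟨d, hd, hdinf⟩ := exists_infinite_piece (donors_finite o) hmB
      (fun x hx => origMem_subset_donors o hx.1)
    have hd𝒜 : d ∈ 𝒜 := donors_subset hfmem o ho hd
    simp only [Set.mem_iUnion]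
    refine ⟨d, ⟨hd𝒜, hdinf.mono fun x hx => ⟨hx.2, hx.1.2⟩⟩,
      ⟨o, ho, rfl⟩, hdinf.mono fun x hx => ⟨hx.1.1, hx.2⟩⟩
  exact h ((hfin.biUnion fun a ha =>
    members_meeting_donor_finite hmad hfinj hfmem ha.1).subset hsub)

-- cover lemma: every reservoir member meeting B infinitely is tracked by a member of Fam
include hfinj in
lemma cover_lemma {a B : Set ℕ} (ha : a ∈ 𝒜) (haB : (a ∩ B).Infinite) :
    ∃ m, m ∈ Fam 𝒜 Wst f ∧ (m ∩ a).Infinite ∧ (m ∩ B).Infinite := by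
  rcases cutSet_cases (f := f) hfinj a with hcut | ⟨s₀, hact, hfs, hcut⟩
  · refine ⟨a \ cutSet 𝒜 Wst f a, origMem_mem_Fam (o := .inr (.inr (.inr a)))
      ⟨ha, ?_⟩, ?_, ?_⟩
    · rw [hcut, Set.diff_empty]
      exact haB.mono Set.inter_subset_left
    · rw [hcut, Set.diff_empty]
      exact haB.mono (Set.inter_subset_left.trans (by exact fun x hx => ⟨hx, hx⟩))
    · rw [hcut, Set.diff_empty]
      exact haB
  · by_cases hc : (cutSet 𝒜 Wst f a ∩ (a ∩ B)).Infinite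
    · refine ⟨origMem 𝒜 Wst f (slotOrig s₀), origMem_mem_Fam (slotOrig_ok hact),
        ?_, ?_⟩
      · refine hc.mono ?_
        rw [hcut]
        intro x hx
        exact ⟨piece_subset_origMem hact hx.1, hx.2.1⟩
      · refine hc.mono ?_
        rw [hcut]
        intro x hx
        exact ⟨piece_subset_origMem hact hx.1, hx.2.2⟩
    · have hinf : ((a ∩ B) \ cutSet 𝒜 Wst f a).Infinite := by
        refine ((haB.diff (Set.not_infinite.mp hc)).mono ?_)
        rintro x ⟨⟨hxa, hxB⟩, hxc⟩
        exact ⟨⟨hxa, hxB⟩, fun hcut' => hxc ⟨hcut', hxa, hxB⟩⟩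
      refine ⟨a \ cutSet 𝒜 Wst f a, origMem_mem_Fam (o := .inr (.inr (.inr a)))
        ⟨ha, hinf.mono fun x hx => ⟨hx.1.1, hx.2⟩⟩, ?_, ?_⟩
      · exact hinf.mono fun x hx => ⟨⟨hx.1.1, hx.2⟩, hx.1.1⟩
      · exact hinf.mono fun x hx => ⟨⟨hx.1.1, hx.2⟩, hx.1.2⟩

lemma mk_le_mul_aleph0 {α β : Type} (g : α → β) (hg : ∀ b, Finite {x : α // g x = b}) :
    Cardinal.mk α ≤ Cardinal.mk β * ℵ₀ := by
  have h1 : #α = Cardinal.sum (fun b : β => #{x : α // g x = b}) := by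
    rw [← Cardinal.mk_sigma]
    exact (Cardinal.mk_congr (Equiv.sigmaFiberEquiv g)).symm
  rw [h1, ← Cardinal.sum_const']
  exact Cardinal.sum_le_sum _ _ fun b => (Cardinal.lt_aleph0_of_finite _).le

include hmad htc hfinj hfmem in
lemma trace_Fam_continuum {B : Set ℕ} (h : (ADRestrict 𝒜 B).Infinite) :
    #(ADRestrict (Fam 𝒜 Wst f) B) = Cardinal.continuum := by
  refine le_antisymm (mk_subset_setNat_le _) ?_
  have hAB : #(ADRestrict 𝒜 B) = Cardinal.continuum := (htc B).resolve_left h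
  have hchoice : ∀ x : ADRestrict 𝒜 B, ∃ m, m ∈ Fam 𝒜 Wst f ∧
      (m ∩ x.1).Infinite ∧ (m ∩ B).Infinite :=
    fun x => cover_lemma hfinj x.2.1 x.2.2
  set g : ADRestrict 𝒜 B → ADRestrict (Fam 𝒜 Wst f) B := fun x =>
    ⟨(hchoice x).choose, (hchoice x).choose_spec.1, (hchoice x).choose_spec.2.2⟩ with hg
  have hfib : ∀ m : ADRestrict (Fam 𝒜 Wst f) B, Finite {x : ADRestrict 𝒜 B // g x = m} := by
    intro m
    have hmF : m.1 ∈ Fam 𝒜 Wst f := m.2.1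
    obtain ⟨o, ho, homem⟩ := hmF
    have hfin : {b | b ∈ 𝒜 ∧ (m.1 ∩ b).Infinite}.Finite := by
      refine ((donors_finite (f := f) o).subset ?_)
      rintro b ⟨hb, hbinf⟩
      rw [homem] at hbinf
      exact donor_of_inter_infinite hfmem ho hb hmad.1.2.2 hbinf
    have : Function.Injective (fun x : {x : ADRestrict 𝒜 B // g x = m} =>
        (⟨x.1.1, x.1.2.1, by
          have := (hchoice x.1).choose_spec.2.1
          have he : (hchoice x.1).choose = m.1 := congrArg Subtype.val x.2
          rwa [he] at this⟩ : {b | b ∈ 𝒜 ∧ (m.1 ∩ b).Infinite})) :=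
      fun x y hxy => Subtype.ext (Subtype.ext (by simpa using congrArg Subtype.val hxy))
    have : Finite {b | b ∈ 𝒜 ∧ (m.1 ∩ b).Infinite} := hfin.to_subtype
    exact Finite.of_injective _ ‹Function.Injective _›
  have hle : #(ADRestrict 𝒜 B) ≤ #(ADRestrict (Fam 𝒜 Wst f) B) * ℵ₀ :=
    mk_le_mul_aleph0 g hfib
  rw [hAB] at hle
  rcases le_total (#(ADRestrict (Fam 𝒜 Wst f) B)) ℵ₀ with hc | hc
  · exfalso
    have : Cardinal.continuum ≤ ℵ₀ * ℵ₀ :=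
      hle.trans (mul_le_mul_left hc ℵ₀)
    rw [Cardinal.aleph0_mul_aleph0] at this
    exact absurd this (not_le.mpr Cardinal.aleph0_lt_continuum)
  · rwa [Cardinal.mul_aleph0_eq hc] at hle

include hmad htc hfinj hfmem in
lemma Fam_trueCard : TrueCardContinuum (Fam 𝒜 Wst f) := by
  intro B
  by_cases hfin : (ADRestrict (Fam 𝒜 Wst f) B).Finite
  · exact Or.inl hfin
  · exact Or.inr (trace_Fam_continuum hmad htc hfinj hfmem
      (trace_Fam_to_A hmad hfinj hfmem hfin))

end ConstructionFacts3
section FinalFacts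

open Cardinal

variable {𝒜 : Set (Set ℕ)} {Wst : Set ℕ} {f : Slot → Set ℕ}
variable (hmad : MadFamily 𝒜) (htc : TrueCardContinuum 𝒜)
  (hW1 : (ADRestrict 𝒜 Wst).Infinite) (hW2 : (ADRestrict 𝒜 Wstᶜ).Infinite)
  (hfinj : Function.Injective f) (hfmem : ∀ s, f s ∈ slotSet 𝒜 Wst s)

include hmad in
lemma ADRestrict_univ : ADRestrict 𝒜 Set.univ = 𝒜 := by
  ext a
  constructor
  · exact fun h => h.1
  · intro h
    refine ⟨h, ?_⟩
    rw [Set.inter_univ]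
    exact hmad.1.2.1 a h

include hmad hW1 hW2 in
lemma slotSet_repr (s : Slot) :
    ∃ Y, slotSet 𝒜 Wst s = ADRestrict 𝒜 Y ∧ (ADRestrict 𝒜 Y).Infinite := by
  by_cases hact : SlotActive 𝒜 Wst s
  · refine ⟨pieceY Wst s, ?_, ?_⟩
    · ext a
      exact ⟨fun h => ⟨h.1, h.2 hact⟩, fun h => ⟨h.1, fun _ => h.2⟩⟩
    · rcases s with ⟨t, W⟩ | (η | (η | X))
      · exact hact.2 W hact.1
      · exact hW1
      · exact hW2
      · exact hact
  · refine ⟨Set.univ, ?_, ?_⟩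
    · rw [ADRestrict_univ hmad]
      ext a
      exact ⟨fun h => h.1, fun h => ⟨h, fun ha => absurd ha hact⟩⟩
    · rw [ADRestrict_univ hmad]
      exact hmad.1.1

include hmad htc hW1 hW2 in
lemma slotSet_card (s : Slot) : Cardinal.continuum ≤ #(slotSet 𝒜 Wst s) := by
  obtain ⟨Y, hY, hYinf⟩ := slotSet_repr hmad hW1 hW2 s
  rw [hY, (htc Y).resolve_left hYinf]

lemma mk_slot_le : #Slot ≤ Cardinal.continuum := by
  have h1 : #(Set ℕ) = Cardinal.continuum := mk_setNat
  have h2 : #(Finset (Set ℕ)) = Cardinal.continuum := by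
    rw [Cardinal.mk_finset_of_infinite, h1]
  have h4 : ∀ {α β : Type}, #α = Cardinal.continuum → #β = Cardinal.continuum →
      #(α ⊕ β) = Cardinal.continuum := by
    intro α β hα hβ
    rw [Cardinal.mk_sum, Cardinal.lift_id, Cardinal.lift_id, hα, hβ,
      Cardinal.add_eq_self Cardinal.aleph0_le_continuum]
  have h3 : #(Finset (Set ℕ) × Set ℕ) = Cardinal.continuum := by
    rw [Cardinal.mk_prod, Cardinal.lift_id, Cardinal.lift_id, h1, h2,
      Cardinal.mul_eq_self Cardinal.aleph0_le_continuum]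
  exact le_of_eq (h4 h3 (h4 h1 (h4 h1 h1)))

/-- There is a set splitting the reservoir into two infinite traces. -/
lemma exists_Wstar (hmad : MadFamily 𝒜) :
    ∃ W : Set ℕ, (ADRestrict 𝒜 W).Infinite ∧ (ADRestrict 𝒜 Wᶜ).Infinite := by
  set b : ℕ → Set ℕ := fun n => (Set.Infinite.natEmbedding 𝒜 hmad.1.1 n).1 with hb
  have hbinj : Function.Injective b := fun n m h =>
    (Set.Infinite.natEmbedding 𝒜 hmad.1.1).injective (Subtype.ext h)
  have hbmem : ∀ n, b n ∈ 𝒜 := fun n => (Set.Infinite.natEmbedding 𝒜 hmad.1.1 n).2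
  set bs : ℕ → Set ℕ := fun n => b n \ ⋃ m ∈ Finset.range n, b m with hbs
  have hbs_sub : ∀ n, bs n ⊆ b n := fun n => Set.diff_subset
  have hbs_inf : ∀ n, (bs n).Infinite := by
    intro n
    have hfin : (b n ∩ ⋃ m ∈ Finset.range n, b m).Finite := by
      have : (⋃ m ∈ Finset.range n, b n ∩ b m).Finite := by
        refine Set.Finite.biUnion (Finset.finite_toSet _) ?_
        intro m hm
        refine hmad.1.2.2 (b n) (hbmem n) (b m) (hbmem m) ?_
        intro he
        have := hbinj he
        simp only [Finset.coe_range, Set.mem_Iio] at hm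
        omega
      refine this.subset ?_
      rintro x ⟨hx1, hx2⟩
      simp only [Set.mem_iUnion] at hx2 ⊢
      obtain ⟨m, hm, hx2⟩ := hx2
      exact ⟨m, hm, hx1, hx2⟩
    have := (hmad.1.2.1 (b n) (hbmem n)).diff hfin
    rwa [Set.diff_self_inter] at this
  have hbs_disj : ∀ m n, m < n → bs m ∩ bs n = ∅ := by
    intro m n hmn
    apply Set.eq_empty_of_forall_notMem
    rintro x ⟨hxm, hxn⟩
    refine hxn.2 ?_
    simp only [Set.mem_iUnion]
    exact ⟨m, by simp [Finset.mem_range, hmn], hbs_sub m hxm⟩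
  refine ⟨⋃ n, bs (2 * n), ?_, ?_⟩
  · have : Function.Injective (fun n => b (2 * n)) := by
      intro n m h
      have := hbinj h
      omega
    refine Set.infinite_of_injective_forall_mem this ?_
    intro n
    refine ⟨hbmem _, ?_⟩
    refine (hbs_inf (2 * n)).mono ?_
    intro x hx
    exact ⟨hbs_sub _ hx, Set.mem_iUnion.2 ⟨n, hx⟩⟩
  · have : Function.Injective (fun n => b (2 * n + 1)) := by
      intro n m h
      have := hbinj h
      omega
    refine Set.infinite_of_injective_forall_mem this ?_
    intro n
    refine ⟨hbmem _, ?_⟩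
    refine (hbs_inf (2 * n + 1)).mono ?_
    intro x hx
    refine ⟨hbs_sub _ hx, ?_⟩
    simp only [Set.mem_compl_iff, Set.mem_iUnion]
    rintro ⟨m, hxm⟩
    rcases lt_trichotomy (2 * m) (2 * n + 1) with h | h | h
    · have hmem : x ∈ bs (2 * m) ∩ bs (2 * n + 1) := ⟨hxm, hx⟩
      rw [hbs_disj (2 * m) (2 * n + 1) h] at hmem
      exact absurd hmem (Set.notMem_empty x)
    · omega
    · have hmem : x ∈ bs (2 * n + 1) ∩ bs (2 * m) := ⟨hx, hxm⟩
      rw [hbs_disj (2 * n + 1) (2 * m) h] at hmem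
      exact absurd hmem (Set.notMem_empty x)

include hmad hfinj hfmem in
lemma Fam_quasiNormal : QuasiNormal (Psi (Fam 𝒜 Wst f)) := by
  intro A B hA hB hd
  have hADf := (Fam_almostDisjoint hmad hfinj hfmem).2.2
  have hmemf := (Fam_almostDisjoint hmad hfinj hfmem).2.1
  by_cases hLA : (levelSet A).Finite
  · exact sepOpen_of_level_finite hADf hmemf hA hB hd hLA
  by_cases hLB : (levelSet B).Finite
  · exact (sepOpen_of_level_finite hADf hmemf hB hA hd.symm hLB).symm
  exfalso
  obtain ⟨SA, hSA, rfl⟩ := hA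
  obtain ⟨SB, hSB, rfl⟩ := hB
  classical
  set t : Finset (Set ℕ) := SA.image natSet ∪ SB.image natSet with ht
  have hLevel : ∀ (S : Finset (Set (Psi (Fam 𝒜 Wst f))))
      (_ : ∀ R ∈ S, RegClosed R) (R : Set (Psi (Fam 𝒜 Wst f))) (_ : R ∈ S),
      levelSet (⋂₀ (S : Set (Set (Psi (Fam 𝒜 Wst f))))) ⊆
        ADRestrict (Fam 𝒜 Wst f) (natSet R) := by
    intro S hS R hR c hc
    obtain ⟨hcF, hpt⟩ := hc
    refine ⟨hcF, ?_⟩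
    exact (regClosed_pt_mem (hS R hR) hmemf).1 (Set.sInter_subset_of_mem hR hpt)
  have hgood : TaskGood 𝒜 t := by
    intro V hV
    rw [ht, Finset.mem_union] at hV
    rcases hV with hV | hV
    · obtain ⟨R, hR, rfl⟩ := Finset.mem_image.1 hV
      exact trace_Fam_to_A hmad hfinj hfmem
        (Set.Infinite.mono (hLevel SA hSA R hR) hLA)
    · obtain ⟨R, hR, rfl⟩ := Finset.mem_image.1 hV
      exact trace_Fam_to_A hmad hfinj hfmem
        (Set.Infinite.mono (hLevel SB hSB R hR) hLB)
  have htne : t.Nonempty := by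
    rcases Finset.eq_empty_or_nonempty SA with rfl | ⟨R, hR⟩
    · rcases Finset.eq_empty_or_nonempty SB with rfl | ⟨R, hR⟩
      · exfalso
        have h0 : (Psi.nat 0 : Psi (Fam 𝒜 Wst f)) ∈
            ⋂₀ ((∅ : Finset (Set (Psi (Fam 𝒜 Wst f)))) : Set (Set (Psi (Fam 𝒜 Wst f)))) := by
          intro R hR
          simp at hR
        exact Set.disjoint_left.1 hd h0 h0
      · exact ⟨natSet R, Finset.mem_union_right _ (Finset.mem_image_of_mem _ hR)⟩
    · exact ⟨natSet R, Finset.mem_union_left _ (Finset.mem_image_of_mem _ hR)⟩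
  set m := origMem 𝒜 Wst f (.inl t) with hm_def
  have hmF : m ∈ Fam 𝒜 Wst f := origMem_mem_Fam ⟨htne, hgood⟩
  have hmV : ∀ V ∈ t, (m ∩ V).Infinite := by
    intro V hV
    have hact : SlotActive 𝒜 Wst (.inl (t, V)) := ⟨hV, hgood⟩
    refine (piece_infinite hfmem hact).mono ?_
    exact Set.subset_inter (piece_subset_origMem hact) (piece_subset_Y _)
  have hpt : ∀ (S : Finset (Set (Psi (Fam 𝒜 Wst f))))
      (_ : ∀ R ∈ S, RegClosed R) (_ : ∀ R ∈ S, natSet R ∈ t),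
      Psi.pt ⟨m, hmF⟩ ∈ ⋂₀ (S : Set (Set (Psi (Fam 𝒜 Wst f)))) := by
    intro S hS hmem
    refine Set.mem_sInter.2 fun R hR => ?_
    exact (regClosed_pt_mem (hS R hR) hmemf).2 (hmV (natSet R) (hmem R hR))
  refine Set.disjoint_left.1 hd
    (hpt SA hSA fun R hR => Finset.mem_union_left _ (Finset.mem_image_of_mem _ hR))
    (hpt SB hSB fun R hR => Finset.mem_union_right _ (Finset.mem_image_of_mem _ hR))

include hfinj hfmem in
lemma Fam_not_almostNormal : ¬ AlmostNormal (Psi (Fam 𝒜 Wst f)) := by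
  intro hAN
  set ℱ := Fam 𝒜 Wst f with hℱ
  set 𝒟 : Set (Set ℕ) := {c | c ∈ ℱ ∧ (c ∩ Wst).Finite} with h𝒟
  have hd : Disjoint (PsiSub ℱ 𝒟) (closure (PsiNat ℱ Wst)) := by
    rw [Set.disjoint_left]
    rintro x ⟨a, ha𝒟, rfl⟩ hxB
    exact (pt_mem_closure_PsiNat.1 hxB) ha𝒟.2
  obtain ⟨U, V, hU, hV, hAU, hBV, hUV⟩ := hAN (PsiSub ℱ 𝒟) (closure (PsiNat ℱ Wst))
    (isClosed_PsiSub 𝒟) (regClosed_closure_PsiNat Wst) hd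
  set X : Set ℕ := {n | Psi.nat n ∈ U} with hX
  have k1 : ∀ c, (hc : c ∈ ℱ) → (c ∩ Wst).Finite → (c \ X).Finite := by
    intro c hc hfin
    have hpt : Psi.pt ⟨c, hc⟩ ∈ U := hAU (pt_mem_PsiSub.2 ⟨hc, hfin⟩)
    exact (hU ⟨c, hc⟩ hpt).subset fun n hn => ⟨hn.1, hn.2⟩
  have k2 : ∀ c, (hc : c ∈ ℱ) → (c ∩ Wst).Infinite → (c ∩ X).Finite := by
    intro c hc hinf
    have hpt : Psi.pt ⟨c, hc⟩ ∈ V := hBV (pt_mem_closure_PsiNat.2 hinf)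
    refine (hV ⟨c, hc⟩ hpt).subset ?_
    rintro n ⟨hnc, hnX⟩
    exact ⟨hnc, fun hmem => Set.disjoint_left.1 hUV hnX hmem⟩
  by_cases h4 : (ADRestrict 𝒜 (Wst ∪ X)ᶜ).Infinite
  · set m := origMem 𝒜 Wst f (.inr (.inr (.inl X))) with hm_def
    have hmF : m ∈ ℱ := origMem_mem_Fam h4
    have hmsub : m ⊆ (Wst ∪ X)ᶜ := piece_subset_Y (.inr (.inr (.inr X)))
    have hWfin : (m ∩ Wst).Finite := by
      rw [Set.eq_empty_of_forall_notMem (s := m ∩ Wst)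
        (fun x hx => (hmsub hx.1) (Or.inl hx.2))]
      exact Set.finite_empty
    have hXdiff : m \ X = m := by
      ext x
      exact ⟨fun h => h.1, fun h => ⟨h, fun hX' => (hmsub h) (Or.inr hX')⟩⟩
    have hfin := k1 m hmF hWfin
    rw [hXdiff] at hfin
    exact piece_infinite hfmem (s := .inr (.inr (.inr X))) h4 hfin
  · have hbad : (ADRestrict 𝒜 (Wst ∪ X)ᶜ).Finite := Set.not_infinite.mp h4
    have hinj2 : Function.Injective (fun η : Set ℕ => f (.inr (.inr (.inl η)))) := by
      intro η η' h
      have := hfinj h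
      exact Sum.inl.inj (Sum.inr.inj (Sum.inr.inj this))
    have hprefin : {η : Set ℕ |
        f (.inr (.inr (.inl η))) ∈ ADRestrict 𝒜 (Wst ∪ X)ᶜ}.Finite :=
      Set.Finite.preimage hinj2.injOn hbad
    obtain ⟨η, hη⟩ := hprefin.infinite_compl.nonempty
    set m := origMem 𝒜 Wst f (.inr (.inl η)) with hm_def
    have hmF : m ∈ ℱ := origMem_mem_Fam trivial
    have hmW : (m ∩ Wst).Infinite := by
      refine (piece_infinite hfmem (s := .inr (.inl η)) trivial).mono ?_
      exact Set.subset_inter Set.subset_union_left (piece_subset_Y _)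
    have hk2 := k2 m hmF hmW
    set p := piece f Wst (.inr (.inr (.inl η))) with hp_def
    have hpinf : p.Infinite := piece_infinite hfmem trivial
    have hpdiff : (p \ X).Finite := by
      have hdon : f (.inr (.inr (.inl η))) ∈ 𝒜 := donor_mem_A hfmem _
      have hfinb : (f (.inr (.inr (.inl η))) ∩ (Wst ∪ X)ᶜ).Finite := by
        by_contra hinfb
        exact hη ⟨hdon, hinfb⟩
      refine hfinb.subset ?_
      rintro n ⟨⟨hnf, hnY⟩, hnX⟩
      refine ⟨hnf, ?_⟩
      rintro (h | h)
      · exact hnY h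
      · exact hnX h
    have hpX : (p ∩ X).Infinite := by
      have h5 := hpinf.diff hpdiff
      rwa [Set.diff_diff_right_self] at h5
    refine hpX (hk2.subset ?_)
    exact Set.inter_subset_inter Set.subset_union_right subset_rfl

end FinalFacts
/-- if there exists a mad family of true cardinality 𝔠, then there is a mad
family ℱ of true cardinality 𝔠 with Ψ(ℱ) quasi-normal but not almost-normal. -/
theorem exists_mad_quasiNormal_not_almostNormal
    (h : ∃ 𝒜, MadFamily 𝒜 ∧ TrueCardContinuum 𝒜) :
    ∃ ℱ, MadFamily ℱ ∧ TrueCardContinuum ℱ ∧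
      QuasiNormal (Psi ℱ) ∧ ¬ AlmostNormal (Psi ℱ) := by
  obtain ⟨𝒜, hmad, htc⟩ := h
  obtain ⟨Wst, hW1, hW2⟩ := exists_Wstar hmad
  obtain ⟨f, hfinj, hfmem⟩ := exists_injective_choice (slotSet 𝒜 Wst) mk_slot_le
    (slotSet_card hmad htc hW1 hW2)
  exact ⟨Fam 𝒜 Wst f, Fam_mad hmad hfinj hfmem, Fam_trueCard hmad htc hfinj hfmem,
    Fam_quasiNormal hmad hfinj hfmem, Fam_not_almostNormal hfinj hfmem⟩

end PsiSpace
end
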